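/- arXiv:2403.02562 — 3 statements merged into one kernel-verified Lean document; each statement's English description precedes it below -/
import Mathlib

section
/- For every n ≥ 1, the number of distinct partitions of [0,1] into basic dyadic intervals having exactly n intervals equals the Catalan number C_{n-1}. -/
/-- The basic dyadic interval `[(i-1)/2^k, i/2^k]`. -/
def dIcc (k i : ℕ) : Set ℝ := Set.Icc ((i - 1 : ℝ) / 2 ^ k) ((i : ℝ) / 2 ^ k)

/-- A basic dyadic interval. -/
def IsDyadicInterval (I : Set ℝ) : Prop :=
  ∃ k i : ℕ, 1 ≤ i ∧ i ≤ 2 ^ k ∧ I = dIcc k i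

/-- A partition of `[0,1]` into basic dyadic intervals. -/
def DyadicPartition (P : Finset (Set ℝ)) : Prop :=
  (∀ I ∈ P, IsDyadicInterval I) ∧
  (∀ I ∈ P, ∀ J ∈ P, I ≠ J → interior I ∩ interior J = ∅) ∧
  ⋃₀ (P : Set (Set ℝ)) = Set.Icc (0 : ℝ) 1

noncomputable local instance : DecidableEq (Set ℝ) := Classical.decEq _

/-- Partition of `dIcc k i` encoded by a binary tree. -/
noncomputable def toPart : ℕ → ℕ → Tree Unit → Finset (Set ℝ)
  | k, i, BinaryTree.nil => {dIcc k i}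
  | k, i, BinaryTree.node _ l r => toPart (k+1) (2*i-1) l ∪ toPart (k+1) (2*i) r

lemma dIcc_left (k i : ℕ) (hi : 1 ≤ i) :
    dIcc (k+1) (2*i-1) = Set.Icc (((i:ℝ)-1)/2^k) ((2*(i:ℝ)-1)/2^(k+1)) := by
  unfold dIcc
  rw [Nat.cast_sub (by omega)]
  push_cast
  have h : (2 * (i:ℝ) - 1 - 1) / 2 ^ (k+1) = ((i:ℝ) - 1) / 2 ^ k := by
    rw [div_eq_div_iff (by positivity) (by positivity)]; ring
  rw [h]

lemma dIcc_right (k i : ℕ) :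
    dIcc (k+1) (2*i) = Set.Icc ((2*(i:ℝ)-1)/2^(k+1)) ((i:ℝ)/2^k) := by
  unfold dIcc
  push_cast
  have h : (2 * (i:ℝ)) / 2 ^ (k+1) = (i:ℝ) / 2 ^ k := by
    rw [div_eq_div_iff (by positivity) (by positivity)]; ring
  rw [h]

lemma a_lt_mid (k i : ℕ) : ((i:ℝ)-1)/2^k < (2*(i:ℝ)-1)/2^(k+1) := by
  rw [div_lt_div_iff₀ (by positivity) (by positivity)]
  have h : (0:ℝ) < 2^k := by positivity
  ring_nf
  nlinarith

lemma mid_lt_b (k i : ℕ) : (2*(i:ℝ)-1)/2^(k+1) < (i:ℝ)/2^k := by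
  rw [div_lt_div_iff₀ (by positivity) (by positivity)]
  have h : (0:ℝ) < 2^k := by positivity
  ring_nf
  nlinarith

lemma a_lt_b (k i : ℕ) : ((i:ℝ)-1)/2^k < (i:ℝ)/2^k :=
  (a_lt_mid k i).trans (mid_lt_b k i)

lemma dIcc_split (k i : ℕ) (hi : 1 ≤ i) :
    dIcc k i = dIcc (k+1) (2*i-1) ∪ dIcc (k+1) (2*i) := by
  rw [dIcc_left k i hi, dIcc_right k i,
    Set.Icc_union_Icc_eq_Icc (a_lt_mid k i).le (mid_lt_b k i).le]
  rfl

lemma interior_left_right (k i : ℕ) (hi : 1 ≤ i) :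
    interior (dIcc (k+1) (2*i-1)) ∩ interior (dIcc (k+1) (2*i)) = ∅ := by
  rw [dIcc_left k i hi, dIcc_right k i, interior_Icc, interior_Icc]
  ext x
  simp only [Set.mem_inter_iff, Set.mem_Ioo, Set.mem_empty_iff_false, iff_false]
  rintro ⟨⟨_, h1⟩, h2, _⟩
  linarith

lemma toPart_subset (k i : ℕ) (hi : 1 ≤ i) (t : Tree Unit) :
    ∀ J ∈ toPart k i t, J ⊆ dIcc k i := by
  induction t generalizing k i with
  | nil => intro J hJ; simp only [toPart, Finset.mem_singleton] at hJ; subst hJ; exact le_rfl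
  | node a l r ihl ihr =>
    intro J hJ
    simp only [toPart, Finset.mem_union] at hJ
    rw [dIcc_split k i hi]
    rcases hJ with hJ | hJ
    · exact (ihl (k+1) (2*i-1) (by omega) J hJ).trans Set.subset_union_left
    · exact (ihr (k+1) (2*i) (by omega) J hJ).trans Set.subset_union_right

lemma toPart_dyadic (k i : ℕ) (hi : 1 ≤ i) (hik : i ≤ 2^k) (t : Tree Unit) :
    ∀ J ∈ toPart k i t, IsDyadicInterval J := by
  induction t generalizing k i with
  | nil =>
    intro J hJ; simp only [toPart, Finset.mem_singleton] at hJ; subst hJ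
    exact ⟨k, i, hi, hik, rfl⟩
  | node a l r ihl ihr =>
    intro J hJ
    simp only [toPart, Finset.mem_union] at hJ
    rcases hJ with hJ | hJ
    · exact ihl (k+1) (2*i-1) (by omega) (by rw [pow_succ]; omega) J hJ
    · exact ihr (k+1) (2*i) (by omega) (by rw [pow_succ]; omega) J hJ

lemma toPart_sUnion (k i : ℕ) (hi : 1 ≤ i) (t : Tree Unit) :
    ⋃₀ (toPart k i t : Set (Set ℝ)) = dIcc k i := by
  induction t generalizing k i with
  | nil => simp [toPart]
  | node a l r ihl ihr =>
    simp only [toPart, Finset.coe_union, Set.sUnion_union]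
    rw [ihl (k+1) (2*i-1) (by omega), ihr (k+1) (2*i) (by omega), ← dIcc_split k i hi]

lemma toPart_interior_nonempty (k i : ℕ) (hi : 1 ≤ i) (t : Tree Unit) :
    ∀ J ∈ toPart k i t, (interior J).Nonempty := by
  induction t generalizing k i with
  | nil =>
    intro J hJ; simp only [toPart, Finset.mem_singleton] at hJ; subst hJ
    rw [dIcc, interior_Icc]
    exact Set.nonempty_Ioo.2 (a_lt_b k i)
  | node a l r ihl ihr =>
    intro J hJ
    simp only [toPart, Finset.mem_union] at hJ
    rcases hJ with hJ | hJ
    · exact ihl (k+1) (2*i-1) (by omega) J hJ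
    · exact ihr (k+1) (2*i) (by omega) J hJ

lemma toPart_pairwise (k i : ℕ) (hi : 1 ≤ i) (t : Tree Unit) :
    ∀ I ∈ toPart k i t, ∀ J ∈ toPart k i t, I ≠ J → interior I ∩ interior J = ∅ := by
  induction t generalizing k i with
  | nil =>
    intro I hI J hJ hne
    simp only [toPart, Finset.mem_singleton] at hI hJ
    exact absurd (hI.trans hJ.symm) hne
  | node a l r ihl ihr =>
    intro I hI J hJ hne
    simp only [toPart, Finset.mem_union] at hI hJ
    have hLR := interior_left_right k i hi
    rcases hI with hI | hI <;> rcases hJ with hJ | hJ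
    · exact ihl (k+1) (2*i-1) (by omega) I hI J hJ hne
    · apply Set.eq_empty_of_subset_empty
      rw [← hLR]
      exact Set.inter_subset_inter
        (interior_mono (toPart_subset _ _ (by omega) _ I hI))
        (interior_mono (toPart_subset _ _ (by omega) _ J hJ))
    · apply Set.eq_empty_of_subset_empty
      rw [← hLR]
      refine fun x hx => ⟨interior_mono (toPart_subset _ _ (by omega) _ J hJ) hx.2,
        interior_mono (toPart_subset _ _ (by omega) _ I hI) hx.1⟩
    · exact ihr (k+1) (2*i) (by omega) I hI J hJ hne

lemma toPart_parts_disjoint (k i : ℕ) (hi : 1 ≤ i) (l r : Tree Unit) :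
    Disjoint (toPart (k+1) (2*i-1) l) (toPart (k+1) (2*i) r) := by
  rw [Finset.disjoint_left]
  intro J hJl hJr
  have h1 := toPart_subset (k+1) (2*i-1) (by omega) l J hJl
  have h2 := toPart_subset (k+1) (2*i) (by omega) r J hJr
  have h3 := toPart_interior_nonempty (k+1) (2*i-1) (by omega) l J hJl
  obtain ⟨x, hx⟩ := h3
  have : x ∈ interior (dIcc (k+1) (2*i-1)) ∩ interior (dIcc (k+1) (2*i)) :=
    ⟨interior_mono h1 hx, interior_mono h2 hx⟩
  rw [interior_left_right k i hi] at this
  exact this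

lemma toPart_card (k i : ℕ) (hi : 1 ≤ i) (t : Tree Unit) :
    (toPart k i t).card = t.numLeaves := by
  induction t generalizing k i with
  | nil => simp [toPart, Tree.numLeaves]
  | node a l r ihl ihr =>
    simp only [toPart, Tree.numLeaves, BinaryTree.numLeaves]
    rw [Finset.card_union_of_disjoint (toPart_parts_disjoint k i hi l r),
      ihl (k+1) (2*i-1) (by omega), ihr (k+1) (2*i) (by omega)]

lemma not_dIcc_subset_left (k i : ℕ) (hi : 1 ≤ i) : ¬ dIcc k i ⊆ dIcc (k+1) (2*i-1) := by
  intro h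
  have hb : ((i:ℝ))/2^k ∈ dIcc k i := Set.right_mem_Icc.2 (a_lt_b k i).le
  have := h hb
  rw [dIcc_left k i hi] at this
  exact absurd this.2 (not_le.2 (mid_lt_b k i))

lemma not_dIcc_subset_right (k i : ℕ) (hi : 1 ≤ i) : ¬ dIcc k i ⊆ dIcc (k+1) (2*i) := by
  intro h
  have ha : ((i:ℝ)-1)/2^k ∈ dIcc k i := Set.left_mem_Icc.2 (a_lt_b k i).le
  have := h ha
  rw [dIcc_right k i] at this
  exact absurd this.1 (not_le.2 (a_lt_mid k i))

lemma toPart_injective (k i : ℕ) (hi : 1 ≤ i) :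
    ∀ t₁ t₂ : Tree Unit, toPart k i t₁ = toPart k i t₂ → t₁ = t₂ := by
  intro t₁
  induction t₁ generalizing k i with
  | nil =>
    intro t₂ h
    cases t₂ with
    | nil => rfl
    | node a l r =>
      exfalso
      have : dIcc k i ∈ toPart k i (Tree.node a l r) := by
        rw [← h]; simp [toPart]
      simp only [toPart, Finset.mem_union] at this
      rcases this with h' | h'
      · exact not_dIcc_subset_left k i hi (toPart_subset _ _ (by omega) _ _ h')
      · exact not_dIcc_subset_right k i hi (toPart_subset _ _ (by omega) _ _ h')
  | node a l r ihl ihr =>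
    intro t₂ h
    cases t₂ with
    | nil =>
      exfalso
      have : dIcc k i ∈ toPart k i (Tree.node a l r) := by
        rw [h]; simp [toPart]
      simp only [toPart, Finset.mem_union] at this
      rcases this with h' | h'
      · exact not_dIcc_subset_left k i hi (toPart_subset _ _ (by omega) _ _ h')
      · exact not_dIcc_subset_right k i hi (toPart_subset _ _ (by omega) _ _ h')
    | node a' l' r' =>
      have hnotboth : ∀ J : Set ℝ, (interior J).Nonempty →
          J ⊆ dIcc (k+1) (2*i-1) → J ⊆ dIcc (k+1) (2*i) → False := by
        intro J ⟨x, hx⟩ h1 h2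
        have : x ∈ interior (dIcc (k+1) (2*i-1)) ∩ interior (dIcc (k+1) (2*i)) :=
          ⟨interior_mono h1 hx, interior_mono h2 hx⟩
        rw [interior_left_right k i hi] at this
        exact this
      have hL : toPart (k+1) (2*i-1) l = toPart (k+1) (2*i-1) l' := by
        ext J
        constructor
        · intro hJ
          have hJ' : J ∈ toPart (k+1) (2*i-1) l' ∪ toPart (k+1) (2*i) r' := by
            have : J ∈ toPart k i (Tree.node a' l' r') := by
              rw [← h]; simp only [toPart, Finset.mem_union]; exact Or.inl hJ
            simpa [toPart] using this
          rcases Finset.mem_union.1 hJ' with h' | h'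
          · exact h'
          · exact (hnotboth J
              (toPart_interior_nonempty _ _ (by omega) _ J hJ)
              (toPart_subset _ _ (by omega) _ J hJ)
              (toPart_subset _ _ (by omega) _ J h')).elim
        · intro hJ
          have hJ' : J ∈ toPart (k+1) (2*i-1) l ∪ toPart (k+1) (2*i) r := by
            have : J ∈ toPart k i (Tree.node a l r) := by
              rw [h]; simp only [toPart, Finset.mem_union]; exact Or.inl hJ
            simpa [toPart] using this
          rcases Finset.mem_union.1 hJ' with h' | h'
          · exact h'
          · exact (hnotboth J
              (toPart_interior_nonempty _ _ (by omega) _ J hJ)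
              (toPart_subset _ _ (by omega) _ J hJ)
              (toPart_subset _ _ (by omega) _ J h')).elim
      have hR : toPart (k+1) (2*i) r = toPart (k+1) (2*i) r' := by
        have h' : toPart (k+1) (2*i-1) l ∪ toPart (k+1) (2*i) r
            = toPart (k+1) (2*i-1) l' ∪ toPart (k+1) (2*i) r' := h
        ext J
        constructor
        · intro hJ
          have hJ' : J ∈ toPart (k+1) (2*i-1) l' ∪ toPart (k+1) (2*i) r' := by
            rw [← h']; exact Finset.mem_union.2 (Or.inr hJ)
          rcases Finset.mem_union.1 hJ' with h'' | h''
          · exact (hnotboth J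
              (toPart_interior_nonempty _ _ (by omega) _ J hJ)
              (toPart_subset _ _ (by omega) _ J h'')
              (toPart_subset _ _ (by omega) _ J hJ)).elim
          · exact h''
        · intro hJ
          have hJ' : J ∈ toPart (k+1) (2*i-1) l ∪ toPart (k+1) (2*i) r := by
            rw [h']; exact Finset.mem_union.2 (Or.inr hJ)
          rcases Finset.mem_union.1 hJ' with h'' | h''
          · exact (hnotboth J
              (toPart_interior_nonempty _ _ (by omega) _ J hJ)
              (toPart_subset _ _ (by omega) _ J h'')
              (toPart_subset _ _ (by omega) _ J hJ)).elim
          · exact h''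
      have el : l = l' := ihl (k+1) (2*i-1) (by omega) l' hL
      have er : r = r' := ihr (k+1) (2*i) (by omega) r' hR
      subst el; subst er
      cases a; cases a'; rfl

lemma dyadic_interior_nonempty {J : Set ℝ} (h : IsDyadicInterval J) : (interior J).Nonempty := by
  obtain ⟨m, j, hj, _, rfl⟩ := h
  rw [dIcc, interior_Icc]
  exact Set.nonempty_Ioo.2 (a_lt_b m j)

lemma dyadic_isClosed {J : Set ℝ} (h : IsDyadicInterval J) : IsClosed J := by
  obtain ⟨m, j, _, _, rfl⟩ := h
  exact isClosed_Icc

lemma toPart_surj (N : ℕ) : ∀ k i (P : Finset (Set ℝ)), P.card = N → 1 ≤ i →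
    (∀ J ∈ P, IsDyadicInterval J) →
    (∀ I ∈ P, ∀ J ∈ P, I ≠ J → interior I ∩ interior J = ∅) →
    ⋃₀ (P : Set (Set ℝ)) = dIcc k i →
    ∃ t : Tree Unit, toPart k i t = P := by
  classical
  induction N using Nat.strong_induction_on with
  | _ N IH =>
  intro k i P hcard hi hdy hpw hun
  by_cases hmem : dIcc k i ∈ P
  · refine ⟨Tree.nil, ?_⟩
    simp only [toPart]
    symm
    rw [Finset.eq_singleton_iff_unique_mem]
    refine ⟨hmem, fun J hJ => ?_⟩
    by_contra hne
    have hsub : J ⊆ dIcc k i := by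
      rw [← hun]; exact Set.subset_sUnion_of_mem (by exact_mod_cast hJ)
    have hdisj := hpw J hJ _ hmem hne
    obtain ⟨x, hx⟩ := dyadic_interior_nonempty (hdy J hJ)
    have : x ∈ interior J ∩ interior (dIcc k i) := ⟨hx, interior_mono hsub hx⟩
    rw [hdisj] at this; exact this
  · have hhalf : ∀ J ∈ P, J ⊆ dIcc (k+1) (2*i-1) ∨ J ⊆ dIcc (k+1) (2*i) := by
      intro J hJ
      obtain ⟨μ, j, hj1, hj2, rfl⟩ := hdy J hJ
      have hsub : dIcc μ j ⊆ dIcc k i := by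
        rw [← hun]; exact Set.subset_sUnion_of_mem (by exact_mod_cast hJ)
      rw [dIcc, dIcc, Set.Icc_subset_Icc_iff (a_lt_b μ j).le] at hsub
      obtain ⟨hA, hB⟩ := hsub
      by_cases hmid : ((j:ℝ)-1)/2^μ < (2*(i:ℝ)-1)/2^(k+1) ∧
          (2*(i:ℝ)-1)/2^(k+1) < (j:ℝ)/2^μ
      · exfalso
        obtain ⟨hm1, hm2⟩ := hmid
        have hμk : μ ≤ k := by
          by_contra hcon
          push_neg at hcon
          set c : ℕ := (2*i-1) * 2^(μ-(k+1)) with hc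
          have hceq : (c:ℝ) * 2^(k+1) = (2*(i:ℝ)-1) * 2^μ := by
            have hpow : (2:ℝ) ^ (μ-(k+1)) * 2 ^ (k+1) = 2 ^ μ :=
              pow_sub_mul_pow (2:ℝ) (by omega)
            rw [hc]
            push_cast [Nat.cast_sub (show 1 ≤ 2*i by omega)]
            rw [mul_assoc, hpow]
          rw [div_lt_div_iff₀ (by positivity) (by positivity)] at hm1 hm2
          have h1 : ((j:ℝ)-1) * 2^(k+1) < (c:ℝ) * 2^(k+1) := by rw [hceq]; linarith
          have h2 : (c:ℝ) * 2^(k+1) < (j:ℝ) * 2^(k+1) := by rw [hceq]; linarith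
          have hp : (0:ℝ) < 2^(k+1) := by positivity
          have h1' : (j:ℝ) < (c:ℝ) + 1 := by nlinarith
          have h2' : (c:ℝ) < (j:ℝ) := by nlinarith
          have h1n : j < c + 1 := by exact_mod_cast h1'
          have h2n : c < j := by exact_mod_cast h2'
          omega
        have hlen : (1:ℝ)/2^μ ≤ 1/2^k := by
          have e1 : (j:ℝ)/2^μ - ((j:ℝ)-1)/2^μ = 1/2^μ := by ring
          have e2 : (i:ℝ)/2^k - ((i:ℝ)-1)/2^k = 1/2^k := by ring
          linarith
        have hkμ : k ≤ μ := by
          rw [div_le_div_iff₀ (by positivity) (by positivity)] at hlen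
          have : (2:ℝ)^k ≤ 2^μ := by linarith
          have h' : (2:ℕ)^k ≤ 2^μ := by exact_mod_cast this
          exact (Nat.pow_le_pow_iff_right (by norm_num)).mp h'
        have : μ = k := le_antisymm hμk hkμ
        subst this
        have hji : j = i := by
          rw [div_le_div_iff₀ (by positivity) (by positivity)] at hA hB
          have hp : (0:ℝ) < 2^μ := by positivity
          have : (i:ℝ) - 1 ≤ (j:ℝ) - 1 := by nlinarith
          have h2 : (j:ℝ) ≤ (i:ℝ) := by nlinarith
          have l1 : i ≤ j := by
            have : (i:ℝ) ≤ (j:ℝ) := by linarith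
            exact_mod_cast this
          have l2 : j ≤ i := by exact_mod_cast h2
          omega
        subst hji
        exact hmem hJ
      · push_neg at hmid
        by_cases hc : ((j:ℝ)-1)/2^μ < (2*(i:ℝ)-1)/2^(k+1)
        · left
          rw [dIcc, dIcc_left k i hi]
          exact Set.Icc_subset_Icc hA (hmid hc)
        · right
          push_neg at hc
          rw [dIcc, dIcc_right k i]
          exact Set.Icc_subset_Icc hc hB
    set L := dIcc (k+1) (2*i-1) with hL
    set R := dIcc (k+1) (2*i) with hR
    set PL := P.filter (fun J => J ⊆ L) with hPL
    set PR := P \ PL with hPR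
    have hPLsub : ∀ J ∈ PL, J ⊆ L := by
      intro J hJ; exact (Finset.mem_filter.1 hJ).2
    have hPRsub : ∀ J ∈ PR, J ⊆ R := by
      intro J hJ
      obtain ⟨hJP, hJn⟩ := Finset.mem_sdiff.1 hJ
      rcases hhalf J hJP with h | h
      · exact absurd (show J ∈ PL from Finset.mem_filter.2 ⟨hJP, h⟩) hJn
      · exact h
    have hLIcc : L = Set.Icc (((i:ℝ)-1)/2^k) ((2*(i:ℝ)-1)/2^(k+1)) := dIcc_left k i hi
    have hRIcc : R = Set.Icc ((2*(i:ℝ)-1)/2^(k+1)) ((i:ℝ)/2^k) := dIcc_right k i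
    have hclosedL : IsClosed (⋃₀ (PL : Set (Set ℝ))) := by
      rw [Set.sUnion_eq_biUnion]
      exact (PL : Set (Set ℝ)).toFinite.isClosed_biUnion
        (fun J hJ => dyadic_isClosed (hdy J (Finset.mem_of_mem_filter J (by exact_mod_cast hJ))))
    have hclosedR : IsClosed (⋃₀ (PR : Set (Set ℝ))) := by
      rw [Set.sUnion_eq_biUnion]
      refine (PR : Set (Set ℝ)).toFinite.isClosed_biUnion (fun J hJ => ?_)
      have : J ∈ P := (Finset.mem_sdiff.1 (by exact_mod_cast hJ)).1
      exact dyadic_isClosed (hdy J this)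
    have hunL : ⋃₀ (PL : Set (Set ℝ)) = L := by
      apply le_antisymm
      · exact Set.sUnion_subset (fun J hJ => hPLsub J (by exact_mod_cast hJ))
      · have hIco : Set.Ico (((i:ℝ)-1)/2^k) ((2*(i:ℝ)-1)/2^(k+1)) ⊆ ⋃₀ (PL : Set (Set ℝ)) := by
          intro x hx
          have hxP : x ∈ ⋃₀ (P : Set (Set ℝ)) := by
            rw [hun, dIcc]
            exact ⟨hx.1, hx.2.le.trans (mid_lt_b k i).le⟩
          obtain ⟨J, hJP, hxJ⟩ := hxP
          have hJP' : J ∈ P := by exact_mod_cast hJP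
          by_cases hJL : J ⊆ L
          · refine ⟨J, ?_, hxJ⟩
            have hmem2 : J ∈ PL := Finset.mem_filter.2 ⟨hJP', hJL⟩
            exact_mod_cast hmem2
          · exfalso
            have hJR : J ⊆ R := (hhalf J hJP').resolve_left hJL
            have := hJR hxJ
            rw [hRIcc] at this
            exact absurd this.1 (not_le.2 hx.2)
        rw [hLIcc, ← closure_Ico (ne_of_lt (a_lt_mid k i))]
        exact hclosedL.closure_subset_iff.2 hIco |>.trans le_rfl
    have hunR : ⋃₀ (PR : Set (Set ℝ)) = R := by
      apply le_antisymm
      · exact Set.sUnion_subset (fun J hJ => hPRsub J (by exact_mod_cast hJ))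
      · have hIoc : Set.Ioc ((2*(i:ℝ)-1)/2^(k+1)) ((i:ℝ)/2^k) ⊆ ⋃₀ (PR : Set (Set ℝ)) := by
          intro x hx
          have hxP : x ∈ ⋃₀ (P : Set (Set ℝ)) := by
            rw [hun, dIcc]
            exact ⟨(a_lt_mid k i).le.trans hx.1.le, hx.2⟩
          obtain ⟨J, hJP, hxJ⟩ := hxP
          have hJP' : J ∈ P := by exact_mod_cast hJP
          by_cases hJL : J ⊆ L
          · exfalso
            have := hJL hxJ
            rw [hLIcc] at this
            exact absurd this.2 (not_le.2 hx.1)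
          · refine ⟨J, ?_, hxJ⟩
            have : J ∈ PR := Finset.mem_sdiff.2 ⟨hJP', fun h => hJL (Finset.mem_filter.1 h).2⟩
            exact_mod_cast this
        rw [hRIcc, ← closure_Ioc (ne_of_lt (mid_lt_b k i))]
        exact hclosedR.closure_subset_iff.2 hIoc |>.trans le_rfl
    have hPLne : PL.Nonempty := by
      have : (((i:ℝ)-1)/2^k) ∈ ⋃₀ (PL : Set (Set ℝ)) := by
        rw [hunL, hLIcc]; exact Set.left_mem_Icc.2 (a_lt_mid k i).le
      obtain ⟨J, hJ, _⟩ := this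
      exact ⟨J, by exact_mod_cast hJ⟩
    have hPRne : PR.Nonempty := by
      have : ((i:ℝ)/2^k) ∈ ⋃₀ (PR : Set (Set ℝ)) := by
        rw [hunR, hRIcc]; exact Set.right_mem_Icc.2 (mid_lt_b k i).le
      obtain ⟨J, hJ, _⟩ := this
      exact ⟨J, by exact_mod_cast hJ⟩
    have hPLP : PL ⊆ P := Finset.filter_subset _ _
    have hcards : PL.card + PR.card = N := by
      rw [hPR, Finset.card_sdiff_of_subset hPLP, hcard]
      have := Finset.card_le_card hPLP
      omega
    have hcardL : PL.card < N := by
      have := Finset.card_pos.2 hPRne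
      omega
    have hcardR : PR.card < N := by
      have := Finset.card_pos.2 hPLne
      omega
    obtain ⟨tl, htl⟩ := IH PL.card hcardL (k+1) (2*i-1) PL rfl (by omega)
      (fun J hJ => hdy J (hPLP hJ))
      (fun I hI J hJ hne => hpw I (hPLP hI) J (hPLP hJ) hne) hunL
    obtain ⟨tr, htr⟩ := IH PR.card hcardR (k+1) (2*i) PR rfl (by omega)
      (fun J hJ => hdy J (Finset.mem_sdiff.1 hJ).1)
      (fun I hI J hJ hne => hpw I (Finset.mem_sdiff.1 hI).1 J (Finset.mem_sdiff.1 hJ).1 hne) hunR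
    refine ⟨Tree.node () tl tr, ?_⟩
    simp only [toPart]
    rw [htl, htr, hPR, Finset.union_sdiff_of_subset hPLP]

theorem stmt9 (n : ℕ) (hn : 1 ≤ n) :
    Nat.card {P : Finset (Set ℝ) // DyadicPartition P ∧ P.card = n} = catalan (n - 1) := by
  classical
  have key : Nat.card {P : Finset (Set ℝ) // DyadicPartition P ∧ P.card = n}
      = Nat.card {t : Tree Unit // t.numNodes = n - 1} := by
    refine (Nat.card_eq_of_bijective (fun t =>
      (⟨toPart 0 1 t.1, ⟨⟨toPart_dyadic 0 1 le_rfl (by norm_num) t.1,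
        toPart_pairwise 0 1 le_rfl t.1, by
          have := toPart_sUnion 0 1 le_rfl t.1
          rw [this, dIcc]
          norm_num⟩, by
          rw [toPart_card 0 1 le_rfl t.1, show Tree.numLeaves t.1 = Tree.numNodes t.1 + 1 from BinaryTree.numLeaves_eq_numNodes_succ _, t.2]
          omega⟩⟩ : {P : Finset (Set ℝ) // DyadicPartition P ∧ P.card = n})) ⟨?_, ?_⟩).symm
    · intro t₁ t₂ h
      have : toPart 0 1 t₁.1 = toPart 0 1 t₂.1 := congrArg Subtype.val h
      exact Subtype.ext (toPart_injective 0 1 le_rfl t₁.1 t₂.1 this)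
    · rintro ⟨P, ⟨hdy, hpw, hun⟩, hcard⟩
      obtain ⟨t, ht⟩ := toPart_surj n 0 1 P hcard le_rfl hdy hpw (by
        rw [hun, dIcc]; norm_num)
      have hnodes : t.numNodes = n - 1 := by
        have := toPart_card 0 1 le_rfl t
        rw [ht, hcard, show Tree.numLeaves t = Tree.numNodes t + 1 from BinaryTree.numLeaves_eq_numNodes_succ _] at this
        omega
      exact ⟨⟨t, hnodes⟩, Subtype.ext ht⟩
  rw [key]
  have : {t : Tree Unit // t.numNodes = n - 1} ≃ {t : Tree Unit // t ∈ Tree.treesOfNumNodesEq (n-1)} :=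
    Equiv.subtypeEquivRight (fun t => (BinaryTree.mem_treesOfNumNodesEq).symm)
  rw [Nat.card_congr this, Nat.card_eq_finsetCard, BinaryTree.treesOfNumNodesEq_card_eq_catalan]
end

section
/- Let f be an element of 2V represented by a grid diagram with source partition {I_i × J_j : 1 ≤ i ≤ m, 1 ≤ j ≤ n}. A basic dyadic interval I ⊆ [0,1] in the horizontal coordinate is a union of consecutive intervals among the I_i corresponding to a leaf (or absent node) of the reduced vertical tree if and only if there exists n_0 ∈ ℕ such that for all k ≥ n_0 and every basic dyadic interval K of length 1/2^k, the rectangle I × K is mapped by f affinely onto a basic dyadic rectangle. Consequently, the reduced grid diagram of f is uniquely determined by f. -/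
/-- A basic dyadic rectangle: a product of two basic dyadic intervals. -/
def IsDyadicRect (R : Set (ℝ × ℝ)) : Prop :=
  ∃ I J : Set ℝ, IsDyadicInterval I ∧ IsDyadicInterval J ∧ R = I ×ˢ J

/-- `f` is affine with dyadic data on `R`: `(x, y) ↦ (2^a x + c, 2^b y + d)` on `R`. -/
def DyadicAffineOn (f : ℝ × ℝ → ℝ × ℝ) (R : Set (ℝ × ℝ)) : Prop :=
  ∃ a b : ℤ, ∃ c d : ℝ, ∀ p ∈ R, f p = ((2 : ℝ) ^ a * p.1 + c, (2 : ℝ) ^ b * p.2 + d)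

/-- `(P, Q)` is a grid diagram for `f` : the source partition is the grid
`{I × J : I ∈ P, J ∈ Q}` for dyadic partitions `P`, `Q` of `[0,1]`, and `f` is dyadic-affine
on each grid rectangle, mapping it onto a basic dyadic rectangle. -/
def GridRep (f : ℝ × ℝ → ℝ × ℝ) (P Q : Finset (Set ℝ)) : Prop :=
  DyadicPartition P ∧ DyadicPartition Q ∧
  ∀ I ∈ P, ∀ J ∈ Q, DyadicAffineOn f (I ×ˢ J) ∧ IsDyadicRect (f '' (I ×ˢ J))

open Classical in
/-- A vertical reduction is possible: two intervals of `P` can be merged into a single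
basic dyadic interval and the result is still a grid diagram for `f`. -/
noncomputable def VertReducible (f : ℝ × ℝ → ℝ × ℝ) (P Q : Finset (Set ℝ)) : Prop :=
  ∃ I₁ ∈ P, ∃ I₂ ∈ P, I₁ ≠ I₂ ∧ IsDyadicInterval (I₁ ∪ I₂) ∧
    GridRep f (insert (I₁ ∪ I₂) ((P.erase I₁).erase I₂)) Q

open Classical in
/-- A horizontal reduction is possible. -/
noncomputable def HorizReducible (f : ℝ × ℝ → ℝ × ℝ) (P Q : Finset (Set ℝ)) : Prop :=
  ∃ J₁ ∈ Q, ∃ J₂ ∈ Q, J₁ ≠ J₂ ∧ IsDyadicInterval (J₁ ∪ J₂) ∧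
    GridRep f P (insert (J₁ ∪ J₂) ((Q.erase J₁).erase J₂))

/-- A reduced grid diagram: a grid diagram admitting no vertical or horizontal reduction. -/
def ReducedGridRep (f : ℝ × ℝ → ℝ × ℝ) (P Q : Finset (Set ℝ)) : Prop :=
  GridRep f P Q ∧ ¬ VertReducible f P Q ∧ ¬ HorizReducible f P Q



set_option linter.unusedVariables false

open Set

lemma tp_pos (k : ℕ) : (0:ℝ) < 2 ^ k := by positivity

lemma dlo_lt_dhi (k i : ℕ) : ((i:ℝ) - 1) / 2 ^ k < (i:ℝ) / 2 ^ k :=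
  div_lt_div_of_pos_right (by linarith) (tp_pos k)

lemma dIcc_nonempty (k i : ℕ) : (dIcc k i).Nonempty :=
  Set.nonempty_Icc.2 (dlo_lt_dhi k i).le

lemma interior_dIcc (k i : ℕ) :
    interior (dIcc k i) = Set.Ioo (((i:ℝ) - 1) / 2 ^ k) ((i:ℝ) / 2 ^ k) := interior_Icc

lemma interior_dIcc_nonempty (k i : ℕ) : (interior (dIcc k i)).Nonempty := by
  rw [interior_dIcc]; exact Set.nonempty_Ioo.2 (dlo_lt_dhi k i)

lemma pow_split {k' k : ℕ} (h : k' ≤ k) : (2:ℝ) ^ k = 2 ^ (k - k') * 2 ^ k' := by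
  rw [← pow_add, Nat.sub_add_cancel h]

lemma div_le_div_pow_iff {a b : ℝ} {k' k : ℕ} (h : k' ≤ k) :
    a / 2 ^ k' ≤ b / 2 ^ k ↔ a * 2 ^ (k - k') ≤ b := by
  rw [div_le_div_iff₀ (tp_pos k') (tp_pos k), pow_split h, ← mul_assoc,
    mul_le_mul_iff_left₀ (tp_pos k'), mul_comm a]

lemma div_le_div_pow_iff' {a b : ℝ} {k' k : ℕ} (h : k' ≤ k) :
    b / 2 ^ k ≤ a / 2 ^ k' ↔ b ≤ a * 2 ^ (k - k') := by
  rw [div_le_div_iff₀ (tp_pos k) (tp_pos k'), pow_split h, ← mul_assoc,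
    mul_le_mul_iff_left₀ (tp_pos k'), mul_comm a]

lemma div_lt_div_pow_iff {a b : ℝ} {k' k : ℕ} (h : k' ≤ k) :
    a / 2 ^ k' < b / 2 ^ k ↔ a * 2 ^ (k - k') < b := by
  rw [div_lt_div_iff₀ (tp_pos k') (tp_pos k), pow_split h, ← mul_assoc,
    mul_lt_mul_iff_left₀ (tp_pos k'), mul_comm a]

lemma div_lt_div_pow_iff' {a b : ℝ} {k' k : ℕ} (h : k' ≤ k) :
    b / 2 ^ k < a / 2 ^ k' ↔ b < a * 2 ^ (k - k') := by
  rw [div_lt_div_iff₀ (tp_pos k) (tp_pos k'), pow_split h, ← mul_assoc,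
    mul_lt_mul_iff_left₀ (tp_pos k'), mul_comm a]

/-- Nesting: deeper interval inside shallower one if interiors overlap. -/
lemma dIcc_subset_of_overlap {k k' i i' : ℕ} (hkk : k' ≤ k)
    (hov : (interior (dIcc k i) ∩ interior (dIcc k' i')).Nonempty) :
    dIcc k i ⊆ dIcc k' i' := by
  obtain ⟨x, hx1, hx2⟩ := hov
  rw [interior_dIcc] at hx1 hx2
  -- strict inequalities
  have h1 : ((i':ℝ) - 1) / 2 ^ k' < (i:ℝ) / 2 ^ k := lt_trans hx2.1 hx1.2
  have h2 : ((i:ℝ) - 1) / 2 ^ k < (i':ℝ) / 2 ^ k' := lt_trans hx1.1 hx2.2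
  rw [div_lt_div_pow_iff hkk] at h1
  rw [div_lt_div_pow_iff' hkk] at h2
  -- integer consequences
  have e1 : ((i':ℝ) - 1) * 2 ^ (k - k') ≤ (i:ℝ) - 1 := by
    have : ((i':ℝ) - 1) * 2 ^ (k - k') + 1 ≤ (i:ℝ) := by
      have := (Int.add_one_le_iff (a := ((i':ℤ) - 1) * 2 ^ (k - k')) (b := (i:ℤ))).2
        (by exact_mod_cast h1)
      exact_mod_cast this
    linarith
  have e2 : (i:ℝ) ≤ (i':ℝ) * 2 ^ (k - k') := by
    have h2' : (i:ℤ) - 1 < (i':ℤ) * 2 ^ (k - k') := by exact_mod_cast h2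
    have : (i:ℤ) ≤ (i':ℤ) * 2 ^ (k - k') := by linarith [Int.lt_iff_add_one_le.mp h2']
    exact_mod_cast this
  apply Set.Icc_subset_Icc
  · rw [div_le_div_pow_iff hkk]; linarith
  · rw [div_le_div_pow_iff' hkk]; exact e2

lemma zp_pos (a : ℤ) : (0:ℝ) < 2 ^ a := zpow_pos (by norm_num) a

lemma Icc_eq_Icc_endpoints {a b a' b' : ℝ} (hab : a ≤ b) (h : Set.Icc a b = Set.Icc a' b') :
    a = a' ∧ b = b' := by
  have hab' : a' ≤ b' := Set.nonempty_Icc.1 (h ▸ Set.nonempty_Icc.2 hab)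
  exact ⟨by rw [← csInf_Icc hab, h, csInf_Icc hab'],
    by rw [← csSup_Icc hab, h, csSup_Icc hab']⟩

lemma affine_data_unique {a a' : ℤ} {c c' : ℝ} {x₁ x₂ : ℝ} (hne : x₁ ≠ x₂)
    (h1 : (2:ℝ) ^ a * x₁ + c = (2:ℝ) ^ a' * x₁ + c')
    (h2 : (2:ℝ) ^ a * x₂ + c = (2:ℝ) ^ a' * x₂ + c') : a = a' ∧ c = c' := by
  have hp : (2:ℝ) ^ a = (2:ℝ) ^ a' := by
    have h3 : (2:ℝ) ^ a * (x₁ - x₂) = (2:ℝ) ^ a' * (x₁ - x₂) := by ring_nf; nlinarith [h1, h2]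
    exact mul_right_cancel₀ (sub_ne_zero.2 hne) h3
  refine ⟨zpow_right_injective₀ (by norm_num) (by norm_num) hp, ?_⟩
  rw [hp] at h1; linarith

lemma image_prod_affine {f : ℝ × ℝ → ℝ × ℝ} {X Y : Set ℝ} {g h : ℝ → ℝ}
    (hf : ∀ p ∈ X ×ˢ Y, f p = (g p.1, h p.2)) :
    f '' (X ×ˢ Y) = (g '' X) ×ˢ (h '' Y) := by
  ext q
  constructor
  · rintro ⟨p, hp, rfl⟩
    rw [hf p hp]
    exact ⟨⟨p.1, hp.1, rfl⟩, ⟨p.2, hp.2, rfl⟩⟩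
  · rintro ⟨⟨x, hx, hq1⟩, ⟨y, hy, hq2⟩⟩
    refine ⟨(x, y), ⟨hx, hy⟩, ?_⟩
    rw [hf (x, y) ⟨hx, hy⟩]
    exact Prod.ext hq1 hq2

/-- Key lemma: a dyadic affine map sending a dyadic interval onto a dyadic interval sends
dyadic subintervals to dyadic intervals. -/
lemma image_dyadic_sub {a : ℤ} {c : ℝ} {k i k' i' K S : ℕ}
    (hi' : 1 ≤ i') (hi2' : i' ≤ 2 ^ k')
    (him : (fun x => (2:ℝ) ^ a * x + c) '' dIcc k i = dIcc k' i')
    (hsub : dIcc K S ⊆ dIcc k i) :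
    IsDyadicInterval ((fun x => (2:ℝ) ^ a * x + c) '' dIcc K S) := by
  set p : ℝ := (2:ℝ) ^ a with hpdef
  have ha : (0:ℝ) < p := zp_pos a
  rw [dIcc, Set.image_affine_Icc' ha] at him
  obtain ⟨he1, he2⟩ := Icc_eq_Icc_endpoints
    (by nlinarith [dlo_lt_dhi k i, ha] : p * (((i:ℝ) - 1) / 2 ^ k) + c ≤ p * ((i:ℝ) / 2 ^ k) + c)
    him
  -- slope identity
  have hp : p / 2 ^ k = 1 / 2 ^ k' := by
    have : p * ((i:ℝ) / 2 ^ k) - p * (((i:ℝ) - 1) / 2 ^ k) = (i':ℝ) / 2 ^ k' - ((i':ℝ) - 1) / 2 ^ k' := by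
      rw [← he1, ← he2]; ring
    field_simp at this ⊢
    linarith
  -- K ≥ k
  have hkK : k ≤ K := by
    have m1 := hsub (Set.left_mem_Icc.2 (dlo_lt_dhi K S).le)
    have m2 := hsub (Set.right_mem_Icc.2 (dlo_lt_dhi K S).le)
    have : (1:ℝ) / 2 ^ K ≤ 1 / 2 ^ k := by
      have := m1.1; have := m2.2
      have expand : (1:ℝ)/2^K = (S:ℝ)/2^K - ((S:ℝ)-1)/2^K := by ring
      have expand2 : (1:ℝ)/2^k = (i:ℝ)/2^k - ((i:ℝ)-1)/2^k := by ring
      rw [expand, expand2]; linarith [m1.1, m2.2]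
    have h2 : (2:ℝ) ^ k ≤ 2 ^ K := by
      rw [div_le_div_iff₀ (tp_pos K) (tp_pos k), one_mul, one_mul] at this; exact this
    exact_mod_cast (pow_le_pow_iff_right₀ (a := (2:ℝ)) (by norm_num)).1 h2
  set K' : ℕ := K - k + k' with hK'def
  have hkK' : k' ≤ K' := by omega
  have hKK' : K' - k' = K - k := by omega
  have hpowid : (2:ℝ) ^ k' * 2 ^ K = 2 ^ k * 2 ^ K' := by
    rw [← pow_add, ← pow_add]; congr 1; omega
  have idA : p / 2 ^ K = 1 / 2 ^ K' := by
    rw [div_eq_div_iff (tp_pos K).ne' (tp_pos K').ne', one_mul]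
    rw [div_eq_div_iff (tp_pos k).ne' (tp_pos k').ne', one_mul] at hp
    nlinarith [hpowid, tp_pos K, tp_pos K', tp_pos k, tp_pos k']
  have hc : c = ((i':ℝ) - i) / 2 ^ k' := by
    have : c = (i':ℝ) / 2 ^ k' - p * ((i:ℝ) / 2 ^ k) := by linarith [he2]
    rw [this]
    have : p * ((i:ℝ) / 2 ^ k) = (i:ℝ) * (p / 2 ^ k) := by ring
    rw [this, hp]; ring
  set T : ℤ := (S : ℤ) + ((i':ℤ) - i) * 2 ^ (K' - k') with hTdef
  have idB : ((i':ℝ) - i) / 2 ^ k' = ((i':ℝ) - i) * 2 ^ (K' - k') / 2 ^ K' := by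
    rw [div_eq_div_iff (tp_pos k').ne' (tp_pos K').ne']
    rw [mul_assoc, ← pow_add]
    congr 2
    omega
  -- endpoints of the image
  have elo : p * (((S:ℝ) - 1) / 2 ^ K) + c = ((T:ℝ) - 1) / 2 ^ K' := by
    have : p * (((S:ℝ) - 1) / 2 ^ K) = ((S:ℝ) - 1) * (p / 2 ^ K) := by ring
    rw [this, idA, hc, idB]; push_cast [hTdef]; ring
  have ehi : p * ((S:ℝ) / 2 ^ K) + c = (T:ℝ) / 2 ^ K' := by
    have : p * ((S:ℝ) / 2 ^ K) = (S:ℝ) * (p / 2 ^ K) := by ring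
    rw [this, idA, hc, idB]; push_cast [hTdef]; ring
  have himg : (fun x => p * x + c) '' dIcc K S = Set.Icc (((T:ℝ) - 1) / 2 ^ K') ((T:ℝ) / 2 ^ K') := by
    rw [dIcc, Set.image_affine_Icc' ha, elo, ehi]
  -- bounds on T from containment in dIcc k' i'
  have hsub2 : (fun x => p * x + c) '' dIcc K S ⊆ dIcc k' i' := by
    intro y hy
    have : y ∈ (fun x => p * x + c) '' dIcc k i := Set.image_mono hsub hy
    rw [dIcc, Set.image_affine_Icc' ha, he1, he2] at this
    exact this
  rw [himg] at hsub2
  have hTlo : ((i':ℝ) - 1) / 2 ^ k' ≤ ((T:ℝ) - 1) / 2 ^ K' :=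
    (hsub2 (Set.left_mem_Icc.2 (by gcongr; linarith))).1
  have hThi : (T:ℝ) / 2 ^ K' ≤ (i':ℝ) / 2 ^ k' :=
    (hsub2 (Set.right_mem_Icc.2 (by gcongr; linarith))).2
  -- integer bounds on T
  have hT1 : 1 ≤ T := by
    have h0 : (0:ℝ) ≤ ((i':ℝ) - 1) / 2 ^ k' := by
      apply div_nonneg _ (tp_pos k').le
      have : (1:ℝ) ≤ (i':ℝ) := by exact_mod_cast hi'
      linarith
    have : (0:ℝ) ≤ (T:ℝ) - 1 := by
      have h' := h0.trans hTlo
      rw [le_div_iff₀ (tp_pos K')] at h'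
      linarith
    exact_mod_cast (by linarith : (1:ℝ) ≤ (T:ℝ))
  have hT2 : T ≤ 2 ^ K' := by
    have h1 : (i':ℝ) / 2 ^ k' ≤ 1 := by
      rw [div_le_one (tp_pos k')]
      exact_mod_cast hi2'
    have : (T:ℝ) ≤ 2 ^ K' := by
      have h' := hThi.trans h1
      rw [div_le_one (tp_pos K')] at h'
      exact h'
    exact_mod_cast this
  refine ⟨K', T.toNat, ?_, ?_, ?_⟩
  · omega
  · have : (T.toNat : ℤ) ≤ 2 ^ K' := by rw [Int.toNat_of_nonneg (by omega)]; exact hT2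
    exact_mod_cast this
  · rw [himg, dIcc]
    have hcast : ((T.toNat : ℕ) : ℝ) = (T:ℝ) := by
      exact_mod_cast congrArg (fun z : ℤ => (z : ℝ)) (Int.toNat_of_nonneg (by omega : (0:ℤ) ≤ T))
    rw [hcast]


lemma dIcc_subset_unit {k i : ℕ} (h1 : 1 ≤ i) (h2 : i ≤ 2 ^ k) :
    dIcc k i ⊆ Set.Icc (0:ℝ) 1 := by
  apply Set.Icc_subset_Icc
  · apply div_nonneg _ (tp_pos k).le
    have : (1:ℝ) ≤ (i:ℝ) := by exact_mod_cast h1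
    linarith
  · rw [div_le_one (tp_pos k)]; exact_mod_cast h2

open Classical in
noncomputable def depth (J : Set ℝ) : ℕ := if h : IsDyadicInterval J then h.choose else 0
open Classical in
noncomputable def idx (J : Set ℝ) : ℕ :=
  if h : IsDyadicInterval J then h.choose_spec.choose else 0

lemma depth_spec {J : Set ℝ} (h : IsDyadicInterval J) :
    1 ≤ idx J ∧ idx J ≤ 2 ^ depth J ∧ J = dIcc (depth J) (idx J) := by
  rw [depth, idx]
  simp only [dif_pos h]
  exact h.choose_spec.choose_spec

lemma dIcc_inj {k i k' i' : ℕ} (h : dIcc k i = dIcc k' i') : k = k' ∧ i = i' := by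
  obtain ⟨e1, e2⟩ := Icc_eq_Icc_endpoints (dlo_lt_dhi k i).le h
  have hk : (2:ℝ) ^ k = 2 ^ k' := by
    have h2 : (i:ℝ) / 2 ^ k - ((i:ℝ) - 1) / 2 ^ k = (i':ℝ) / 2 ^ k' - ((i':ℝ) - 1) / 2 ^ k' := by
      rw [e1, e2]
    have l : (i:ℝ) / 2 ^ k - ((i:ℝ) - 1) / 2 ^ k = 1 / 2 ^ k := by ring
    have r : (i':ℝ) / 2 ^ k' - ((i':ℝ) - 1) / 2 ^ k' = 1 / 2 ^ k' := by ring
    rw [l, r, div_eq_div_iff (tp_pos k).ne' (tp_pos k').ne', one_mul, one_mul] at h2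
    exact h2.symm
  have hkk : k = k' := pow_right_injective₀ (by norm_num : (0:ℝ) < 2) (by norm_num) hk
  subst hkk
  refine ⟨rfl, ?_⟩
  field_simp at e2
  exact_mod_cast e2

lemma partition_eq {Q : Finset (Set ℝ)} (hQ : DyadicPartition Q) {J J' : Set ℝ}
    (hJ : J ∈ Q) (hJ' : J' ∈ Q) (hne : (interior J ∩ interior J').Nonempty) : J = J' := by
  by_contra hcon
  rw [hQ.2.1 J hJ J' hJ' hcon] at hne
  exact Set.not_nonempty_empty hne

/-- In any dyadic partition, some member's interior meets the interior of a given
dyadic interval contained in `[0,1]`. -/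
lemma exists_overlap {Q : Finset (Set ℝ)} (hQ : DyadicPartition Q) {m t : ℕ}
    (h1 : 1 ≤ t) (h2 : t ≤ 2 ^ m) :
    ∃ J ∈ Q, (interior (dIcc m t) ∩ interior J).Nonempty := by
  classical
  set E : Set ℝ := ⋃ J ∈ Q, frontier J with hE
  have hEfin : E.Finite := by
    apply Set.Finite.biUnion Q.finite_toSet
    intro J hJ
    obtain ⟨k, i, _, _, rfl⟩ := hQ.1 J hJ
    rw [dIcc, frontier_Icc (dlo_lt_dhi k i).le]
    exact (Set.finite_singleton _).insert _
  have hinf : (Set.Ioo (((t:ℝ) - 1) / 2 ^ m) ((t:ℝ) / 2 ^ m)).Infinite :=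
    Set.Ioo_infinite (dlo_lt_dhi m t)
  obtain ⟨x, hx1, hx2⟩ := (hinf.diff hEfin).nonempty
  have hx01 : x ∈ Set.Icc (0:ℝ) 1 := dIcc_subset_unit h1 h2 (Set.Ioo_subset_Icc_self hx1)
  rw [← hQ.2.2] at hx01
  obtain ⟨J, hJ, hxJ⟩ := hx01
  refine ⟨J, hJ, x, ?_, ?_⟩
  · rw [interior_dIcc]; exact hx1
  · obtain ⟨k, i, _, _, hJd⟩ := hQ.1 J hJ
    have hxfr : x ∉ frontier J := fun hf => hx2 (Set.mem_biUnion hJ hf)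
    rw [hJd, dIcc, frontier_Icc (dlo_lt_dhi k i).le] at hxfr
    rw [hJd, interior_dIcc]
    rw [hJd, dIcc] at hxJ
    rcases eq_or_lt_of_le hxJ.1 with he | hl
    · exact absurd (Set.mem_insert _ _) (by rw [← he] at hxfr; exact fun h => hxfr h)
    rcases eq_or_lt_of_le hxJ.2 with he | hr
    · exact absurd (by rw [he]; exact Set.mem_insert_of_mem _ rfl) hxfr
    exact ⟨hl, hr⟩

/-- A fine dyadic interval is contained in a member of the partition, provided all members
have depth at most `k`. -/
lemma thin_subset {Q : Finset (Set ℝ)} (hQ : DyadicPartition Q) {k i : ℕ}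
    (h1 : 1 ≤ i) (h2 : i ≤ 2 ^ k) (hk : ∀ J ∈ Q, depth J ≤ k) :
    ∃ J ∈ Q, dIcc k i ⊆ J := by
  obtain ⟨J, hJ, hov⟩ := exists_overlap hQ h1 h2
  refine ⟨J, hJ, ?_⟩
  obtain ⟨_, _, hJd⟩ := depth_spec (hQ.1 J hJ)
  rw [hJd] at hov ⊢
  exact dIcc_subset_of_overlap (hk J hJ) hov

/-- Each point of a dyadic interval lies in a dyadic subinterval at any deeper level. -/
lemma exists_thin {m t : ℕ} (ht : 1 ≤ t) (ht2 : t ≤ 2 ^ m) {k : ℕ} (hk : m ≤ k) {y : ℝ}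
    (hy : y ∈ dIcc m t) :
    ∃ s : ℕ, 1 ≤ s ∧ s ≤ 2 ^ k ∧ y ∈ dIcc k s ∧ dIcc k s ⊆ dIcc m t := by
  set C : ℤ := ⌈y * 2 ^ k⌉ with hC
  set L : ℤ := ((t:ℤ) - 1) * 2 ^ (k - m) + 1 with hL
  set s' : ℤ := max C L with hs'
  obtain ⟨hy1, hy2⟩ := hy
  have hyl : ((t:ℝ) - 1) * 2 ^ (k - m) ≤ y * 2 ^ k := by
    rw [← div_le_div_pow_iff (b := y * 2 ^ k) hk]
    calc ((t:ℝ) - 1) / 2 ^ m ≤ y := hy1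
    _ = y * 2 ^ k / 2 ^ k := by field_simp
  have hyr : y * 2 ^ k ≤ (t:ℝ) * 2 ^ (k - m) := by
    rw [← div_le_div_pow_iff' (b := y * 2 ^ k) hk]
    calc y * 2 ^ k / 2 ^ k = y := by field_simp
    _ ≤ (t:ℝ) / 2 ^ m := hy2
  have hCub : C ≤ (t:ℤ) * 2 ^ (k - m) := Int.ceil_le.2 (by push_cast; exact hyr)
  have hLub : L ≤ (t:ℤ) * 2 ^ (k - m) := by
    have h1 : (1:ℤ) ≤ 2 ^ (k - m) := by exact_mod_cast Nat.one_le_two_pow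
    have h2 : (1:ℤ) ≤ (t:ℤ) := by exact_mod_cast ht
    rw [hL]
    nlinarith
  have hs'ub : s' ≤ (t:ℤ) * 2 ^ (k - m) := max_le hCub hLub
  have hs'lb : 1 ≤ s' := by
    apply le_max_of_le_right
    have h1 : (1:ℤ) ≤ 2 ^ (k - m) := by exact_mod_cast Nat.one_le_two_pow
    have h2 : (1:ℤ) ≤ (t:ℤ) := by exact_mod_cast ht
    rw [hL]; nlinarith
  have hs'2k : s' ≤ 2 ^ k := by
    have h2 : (t:ℤ) ≤ 2 ^ m := by exact_mod_cast ht2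
    have : (t:ℤ) * 2 ^ (k - m) ≤ 2 ^ m * 2 ^ (k - m) := by
      apply mul_le_mul_of_nonneg_right h2 (by positivity)
    have hpow : (2:ℤ) ^ m * 2 ^ (k - m) = 2 ^ k := by
      rw [← pow_add]; congr 1; omega
    omega
  refine ⟨s'.toNat, by omega, ?_, ?_, ?_⟩
  · have : (s'.toNat : ℤ) ≤ 2 ^ k := by rw [Int.toNat_of_nonneg (by omega)]; exact hs'2k
    exact_mod_cast this
  · have hcast : ((s'.toNat : ℕ) : ℝ) = ((s' : ℤ) : ℝ) := by
      exact_mod_cast congrArg (fun z : ℤ => (z : ℝ)) (Int.toNat_of_nonneg (by omega : (0:ℤ) ≤ s'))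
    constructor
    · rw [hcast]
      rw [div_le_iff₀ (tp_pos k)]
      have c1 : (C:ℝ) - 1 ≤ y * 2 ^ k := by
        have h3 := Int.ceil_lt_add_one (y * 2 ^ k)
        rw [hC]; push_cast at h3 ⊢
        linarith
      have c2 : (L:ℝ) - 1 ≤ y * 2 ^ k := by
        rw [hL]; push_cast
        linarith [hyl]
      have : ((s':ℤ):ℝ) = max ((C:ℤ):ℝ) ((L:ℤ):ℝ) := by push_cast [hs']; rfl
      rw [this]
      rcases max_cases ((C:ℤ):ℝ) ((L:ℤ):ℝ) with ⟨h, _⟩ | ⟨h, _⟩ <;> rw [h] <;> [exact c1; exact c2]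
    · rw [hcast, le_div_iff₀ (tp_pos k)]
      calc y * 2 ^ k ≤ (C:ℝ) := by rw [hC]; exact_mod_cast Int.le_ceil (y * 2 ^ k)
      _ ≤ ((s':ℤ):ℝ) := by exact_mod_cast le_max_left C L
  · have hcast : ((s'.toNat : ℕ) : ℝ) = ((s' : ℤ) : ℝ) := by
      exact_mod_cast congrArg (fun z : ℤ => (z : ℝ)) (Int.toNat_of_nonneg (by omega : (0:ℤ) ≤ s'))
    apply Set.Icc_subset_Icc
    · rw [hcast, div_le_div_pow_iff hk]
      have : ((t:ℝ) - 1) * 2 ^ (k - m) ≤ (L:ℝ) - 1 := by rw [hL]; push_cast; linarith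
      have h2 : (L:ℝ) ≤ ((s':ℤ):ℝ) := by exact_mod_cast le_max_right C L
      linarith
    · rw [hcast, div_le_div_pow_iff' hk]
      exact_mod_cast hs'ub

lemma two_pow_pred {k : ℕ} (hk : 1 ≤ k) : (2:ℝ) ^ k = 2 * 2 ^ (k - 1) := by
  rw [← pow_succ']; congr 1; omega

lemma dIcc_left_child {k u : ℕ} (hk : 1 ≤ k) (hu : 1 ≤ u) :
    dIcc k (2 * u - 1) = Set.Icc (((u:ℝ) - 1) / 2 ^ (k - 1)) ((2 * (u:ℝ) - 1) / 2 ^ k) := by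
  have hc : ((2 * u - 1 : ℕ) : ℝ) = 2 * (u:ℝ) - 1 := by
    push_cast [Nat.cast_sub (by omega : 1 ≤ 2 * u)]; ring
  have e1 : (((2 * u - 1 : ℕ) : ℝ) - 1) / 2 ^ k = ((u:ℝ) - 1) / 2 ^ (k - 1) := by
    rw [hc, two_pow_pred hk, div_eq_div_iff (by positivity) (by positivity)]
    ring
  have e2 : ((2 * u - 1 : ℕ) : ℝ) / 2 ^ k = (2 * (u:ℝ) - 1) / 2 ^ k := by rw [hc]
  rw [dIcc, e1, e2]

lemma dIcc_right_child {k u : ℕ} (hk : 1 ≤ k) (hu : 1 ≤ u) :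
    dIcc k (2 * u) = Set.Icc ((2 * (u:ℝ) - 1) / 2 ^ k) ((u:ℝ) / 2 ^ (k - 1)) := by
  have e1 : (((2 * u : ℕ):ℝ) - 1) / 2 ^ k = (2 * (u:ℝ) - 1) / 2 ^ k := by push_cast; ring
  have e2 : ((2 * u : ℕ):ℝ) / 2 ^ k = (u:ℝ) / 2 ^ (k - 1) := by
    push_cast
    rw [two_pow_pred hk, div_eq_div_iff (by positivity) (by positivity)]
    ring
  rw [dIcc, e1, e2]

lemma sibling_union {k u : ℕ} (hk : 1 ≤ k) (hu : 1 ≤ u) :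
    dIcc k (2 * u - 1) ∪ dIcc k (2 * u) = dIcc (k - 1) u := by
  rw [dIcc_left_child hk hu, dIcc_right_child hk hu, dIcc]
  apply Set.Icc_union_Icc_eq_Icc
  · rw [two_pow_pred hk, div_le_div_iff₀ (by positivity) (by positivity)]
    nlinarith [tp_pos (k-1)]
  · rw [two_pow_pred hk, div_le_div_iff₀ (by positivity) (by positivity)]
    nlinarith [tp_pos (k-1)]

/-- Forward direction: if `I` sits inside a member of `P`, then all fine strips through `I`
are mapped affinely onto dyadic rectangles. -/
lemma grid_fwd {f : ℝ × ℝ → ℝ × ℝ} {P Q : Finset (Set ℝ)} (hG : GridRep f P Q)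
    {I : Set ℝ} (hI : IsDyadicInterval I) (hsub : ∃ I' ∈ P, I ⊆ I') :
    ∃ n₀ : ℕ, ∀ k ≥ n₀, ∀ i : ℕ, 1 ≤ i → i ≤ 2 ^ k →
      DyadicAffineOn f (I ×ˢ dIcc k i) ∧ IsDyadicRect (f '' (I ×ˢ dIcc k i)) := by
  classical
  obtain ⟨I', hI'P, hII'⟩ := hsub
  refine ⟨Q.sup depth, fun k hk i h1 h2 => ?_⟩
  obtain ⟨J, hJQ, hKJ⟩ := thin_subset hG.2.1 h1 h2
    (fun J hJ => le_trans (Finset.le_sup hJ) hk)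
  obtain ⟨haff, hrect⟩ := hG.2.2 I' hI'P J hJQ
  obtain ⟨a, b, c, d, hfd⟩ := haff
  have hIK : I ×ˢ dIcc k i ⊆ I' ×ˢ J := Set.prod_mono hII' hKJ
  constructor
  · exact ⟨a, b, c, d, fun p hp => hfd p (hIK hp)⟩
  · obtain ⟨U, V, hU, hV, hUV⟩ := hrect
    have him' : f '' (I' ×ˢ J) =
        ((fun x => (2:ℝ) ^ a * x + c) '' I') ×ˢ ((fun y => (2:ℝ) ^ b * y + d) '' J) :=
      image_prod_affine hfd
    obtain ⟨kI, iI, _, _, hI'd⟩ := hG.1.1 I' hI'P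
    obtain ⟨kJ, iJ, _, _, hJd⟩ := hG.2.1.1 J hJQ
    obtain ⟨kU, iU, hU1, hU2, hUd⟩ := hU
    obtain ⟨kV, iV, hV1, hV2, hVd⟩ := hV
    have hprodeq : ((fun x => (2:ℝ) ^ a * x + c) '' I') ×ˢ ((fun y => (2:ℝ) ^ b * y + d) '' J)
        = U ×ˢ V := by rw [← him', hUV]
    have hne : (((fun x => (2:ℝ) ^ a * x + c) '' I') ×ˢ
        ((fun y => (2:ℝ) ^ b * y + d) '' J)).Nonempty := by
      refine Set.Nonempty.prod (Set.Nonempty.image _ ?_) (Set.Nonempty.image _ ?_)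
      · rw [hI'd]; exact dIcc_nonempty _ _
      · rw [hJd]; exact dIcc_nonempty _ _
    obtain ⟨heU, heV⟩ := (Set.prod_eq_prod_iff_of_nonempty hne).1 hprodeq
    obtain ⟨kI0, iI0, _, _, hId⟩ := hI
    have hdy1 : IsDyadicInterval ((fun x => (2:ℝ) ^ a * x + c) '' I) := by
      rw [hId]
      exact image_dyadic_sub hU1 hU2 (by rw [← hI'd, heU, hUd]) (by rw [← hI'd]; exact hId ▸ hII')
    have hdy2 : IsDyadicInterval ((fun y => (2:ℝ) ^ b * y + d) '' dIcc k i) :=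
      image_dyadic_sub hV1 hV2 (by rw [← hJd, heV, hVd]) (by rw [← hJd]; exact hKJ)
    exact ⟨_, _, hdy1, hdy2, image_prod_affine (fun p hp => hfd p (hIK hp))⟩



lemma dIcc_subset_le {K S k i : ℕ} (hsub : dIcc K S ⊆ dIcc k i) : k ≤ K := by
  have m1 := hsub (Set.left_mem_Icc.2 (dlo_lt_dhi K S).le)
  have m2 := hsub (Set.right_mem_Icc.2 (dlo_lt_dhi K S).le)
  have h1 : (1:ℝ) / 2 ^ K ≤ 1 / 2 ^ k := by
    have expand : (1:ℝ)/2^K = (S:ℝ)/2^K - ((S:ℝ)-1)/2^K := by ring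
    have expand2 : (1:ℝ)/2^k = (i:ℝ)/2^k - ((i:ℝ)-1)/2^k := by ring
    rw [expand, expand2]; linarith [m1.1, m2.2]
  have h2 : (2:ℝ) ^ k ≤ 2 ^ K := by
    rw [div_le_div_iff₀ (tp_pos K) (tp_pos k), one_mul, one_mul] at h1; exact h1
  exact_mod_cast (pow_le_pow_iff_right₀ (a := (2:ℝ)) (by norm_num)).1 h2

lemma dIcc_subset_same {k S i : ℕ} (hsub : dIcc k S ⊆ dIcc k i) : S = i := by
  have m1 := hsub (Set.left_mem_Icc.2 (dlo_lt_dhi k S).le)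
  have m2 := hsub (Set.right_mem_Icc.2 (dlo_lt_dhi k S).le)
  have h1 : ((i:ℝ) - 1) / 2 ^ k ≤ ((S:ℝ) - 1) / 2 ^ k := m1.1
  have h2 : (S:ℝ) / 2 ^ k ≤ (i:ℝ) / 2 ^ k := m2.2
  rw [div_le_div_iff_of_pos_right (tp_pos k)] at h1 h2
  have h3 : (S:ℝ) = (i:ℝ) := le_antisymm h2 (by linarith)
  exact_mod_cast h3

lemma erase_swap' {α : Type*} [DecidableEq α] (s : Finset α) (a b : α) :
    (s.erase a).erase b = (s.erase b).erase a := by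
  ext x
  simp only [Finset.mem_erase]
  tauto

lemma two_pow_pred_nat {k : ℕ} (hk : 1 ≤ k) : (2:ℕ) ^ k = 2 * 2 ^ (k - 1) := by
  rw [← pow_succ']; congr 1; omega


open Classical in
lemma merged_partition {P : Finset (Set ℝ)} (hP : DyadicPartition P)
    {k₁ u : ℕ} (hk₁ : 1 ≤ k₁) (hu1 : 1 ≤ u) (hu2 : u ≤ 2 ^ (k₁ - 1))
    (h1P : dIcc k₁ (2 * u - 1) ∈ P) (h2P : dIcc k₁ (2 * u) ∈ P) :
    DyadicPartition
      (insert (dIcc (k₁ - 1) u) ((P.erase (dIcc k₁ (2 * u - 1))).erase (dIcc k₁ (2 * u)))) := by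
  classical
  set L := dIcc k₁ (2 * u - 1) with hLdef
  set R := dIcc k₁ (2 * u) with hRdef
  set par := dIcc (k₁ - 1) u with hpardef
  set lo : ℝ := ((u:ℝ) - 1) / 2 ^ (k₁ - 1) with hlo
  set m : ℝ := (2 * (u:ℝ) - 1) / 2 ^ k₁ with hm
  set hi : ℝ := (u:ℝ) / 2 ^ (k₁ - 1) with hhi
  have intL : interior L = Set.Ioo lo m := by
    rw [hLdef, dIcc_left_child hk₁ hu1]; exact interior_Icc
  have intR : interior R = Set.Ioo m hi := by
    rw [hRdef, dIcc_right_child hk₁ hu1]; exact interior_Icc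
  have intpar : interior par = Set.Ioo lo hi := by
    rw [hpardef, interior_dIcc]
  have hlom : lo < m := by
    rw [hlo, hm, two_pow_pred hk₁, div_lt_div_iff₀ (by positivity) (by positivity)]
    nlinarith [tp_pos (k₁ - 1)]
  have hmhi : m < hi := by
    rw [hm, hhi, two_pow_pred hk₁, div_lt_div_iff₀ (by positivity) (by positivity)]
    nlinarith [tp_pos (k₁ - 1)]
  have hLpar : L ⊆ par := by
    rw [hLdef, hpardef, ← sibling_union hk₁ hu1]; exact Set.subset_union_left
  have hRpar : R ⊆ par := by
    rw [hRdef, hpardef, ← sibling_union hk₁ hu1]; exact Set.subset_union_right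
  -- the core disjointness claim
  have hdisj : ∀ B ∈ P, B ≠ L → B ≠ R → interior par ∩ interior B = ∅ := by
    intro B hB hBL hBR
    rw [← Set.not_nonempty_iff_eq_empty]
    intro hne'
    obtain ⟨kB, iB, hB1, hB2, hBd⟩ := hP.1 B hB
    rcases le_total kB (k₁ - 1) with hle | hle
    · -- par ⊆ B, so L ⊆ B, so L = B, contradiction
      have hsub : par ⊆ B := by
        rw [hBd]
        rw [hBd] at hne'
        exact dIcc_subset_of_overlap hle hne'
      have hLB : L ⊆ B := hLpar.trans hsub
      have : L = B := partition_eq hP h1P hB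
        (by
          obtain ⟨y, hy⟩ := interior_dIcc_nonempty k₁ (2 * u - 1)
          exact ⟨y, hy, interior_mono hLB hy⟩)
      exact hBL this.symm
    · -- B ⊆ par, so B meets L or R, so B = L or B = R
      have hsub : B ⊆ par := by
        rw [hBd]
        rw [hBd] at hne'
        exact dIcc_subset_of_overlap hle
          (by obtain ⟨y, h1, h2⟩ := hne'; exact ⟨y, h2, h1⟩)
      set loB : ℝ := ((iB:ℝ) - 1) / 2 ^ kB with hloB
      set hiB : ℝ := (iB:ℝ) / 2 ^ kB with hhiB
      have intB : interior B = Set.Ioo loB hiB := by rw [hBd, interior_dIcc]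
      have hBne : loB < hiB := dlo_lt_dhi kB iB
      have hep1 : lo ≤ loB := by
        have := hsub (by rw [hBd]; exact Set.left_mem_Icc.2 hBne.le)
        rw [hpardef] at this
        exact this.1
      have hep2 : hiB ≤ hi := by
        have := hsub (by rw [hBd]; exact Set.right_mem_Icc.2 hBne.le)
        rw [hpardef] at this
        exact this.2
      rcases le_or_gt hiB m with hcase | hcase
      · -- interior B ⊆ interior L
        have hBiL : interior B ⊆ interior L := by
          rw [intB, intL]
          exact Set.Ioo_subset_Ioo hep1 hcase
        have : B = L := partition_eq hP hB h1P
          (by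
            have hBneI : (interior B).Nonempty := by
              rw [intB]; exact Set.nonempty_Ioo.2 hBne
            obtain ⟨y, hy⟩ := hBneI
            exact ⟨y, hy, hBiL hy⟩)
        exact hBL this
      · -- pick a point of interior B to the right of m; it lies in interior R
        set y : ℝ := (max m loB + hiB) / 2 with hy
        have hmaxlt : max m loB < hiB := max_lt hcase hBne
        have hyB : y ∈ interior B := by
          rw [intB]
          constructor
          · have : loB ≤ max m loB := le_max_right _ _
            rw [hy]; linarith
          · rw [hy]; linarith
        have hyR : y ∈ interior R := by
          rw [intR]
          have hypar : y ∈ Set.Ioo lo hi := by rw [← intpar]; exact interior_mono hsub hyB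
          constructor
          · have : m ≤ max m loB := le_max_left _ _
            rw [hy]; linarith
          · exact hypar.2
        have : B = R := partition_eq hP hB h2P ⟨y, hyB, hyR⟩
        exact hBR this
  refine ⟨?_, ?_, ?_⟩
  · intro A hA
    rcases Finset.mem_insert.1 hA with h | h
    · exact ⟨k₁ - 1, u, hu1, hu2, h⟩
    · exact hP.1 A (Finset.mem_of_mem_erase (Finset.mem_of_mem_erase h))
  · intro A hA B hB hAB
    rcases Finset.mem_insert.1 hA with hA' | hA' <;> rcases Finset.mem_insert.1 hB with hB' | hB'
    · exact absurd (hA'.trans hB'.symm) hAB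
    · subst hA'
      have hBP := Finset.mem_of_mem_erase (Finset.mem_of_mem_erase hB')
      exact hdisj B hBP (Finset.ne_of_mem_erase (Finset.mem_of_mem_erase hB'))
        (Finset.ne_of_mem_erase hB')
    · subst hB'
      have hAP := Finset.mem_of_mem_erase (Finset.mem_of_mem_erase hA')
      rw [Set.inter_comm]
      exact hdisj A hAP (Finset.ne_of_mem_erase (Finset.mem_of_mem_erase hA'))
        (Finset.ne_of_mem_erase hA')
    · exact hP.2.1 A (Finset.mem_of_mem_erase (Finset.mem_of_mem_erase hA'))
        B (Finset.mem_of_mem_erase (Finset.mem_of_mem_erase hB')) hAB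
  · rw [← hP.2.2]
    ext x
    simp only [Set.mem_sUnion, Finset.coe_insert, Set.mem_insert_iff, Finset.mem_coe,
      Finset.mem_erase]
    constructor
    · rintro ⟨A, hA, hxA⟩
      rcases hA with rfl | ⟨hA2, hA1, hAP⟩
      · rcases (by rw [hpardef, ← sibling_union hk₁ hu1] at hxA; exact hxA : x ∈ L ∪ R) with h | h
        · exact ⟨L, h1P, h⟩
        · exact ⟨R, h2P, h⟩
      · exact ⟨A, hAP, hxA⟩
    · rintro ⟨A, hA, hxA⟩
      by_cases hAL : A = L
      · exact ⟨par, Or.inl rfl, hLpar (hAL ▸ hxA)⟩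
      by_cases hAR : A = R
      · exact ⟨par, Or.inl rfl, hRpar (hAR ▸ hxA)⟩
      · exact ⟨A, Or.inr ⟨hAR, hAL, hA⟩, hxA⟩


open Classical in
lemma merged_grid {f : ℝ × ℝ → ℝ × ℝ} {P Q : Finset (Set ℝ)} (hG : GridRep f P Q)
    {kI iI : ℕ} (hiI1 : 1 ≤ iI) (hiI2 : iI ≤ 2 ^ kI) {n₀ : ℕ}
    (h : ∀ k ≥ n₀, ∀ i : ℕ, 1 ≤ i → i ≤ 2 ^ k →
      DyadicAffineOn f (dIcc kI iI ×ˢ dIcc k i) ∧ IsDyadicRect (f '' (dIcc kI iI ×ˢ dIcc k i)))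
    {k₁ u : ℕ} (hk₁ : 1 ≤ k₁) (hu1 : 1 ≤ u) (hu2 : u ≤ 2 ^ (k₁ - 1))
    (h1P : dIcc k₁ (2 * u - 1) ∈ P) (h2P : dIcc k₁ (2 * u) ∈ P)
    (hparsub : dIcc (k₁ - 1) u ⊆ dIcc kI iI) :
    GridRep f
      (insert (dIcc (k₁ - 1) u) ((P.erase (dIcc k₁ (2 * u - 1))).erase (dIcc k₁ (2 * u)))) Q := by
  refine ⟨merged_partition hG.1 hk₁ hu1 hu2 h1P h2P, hG.2.1, ?_⟩
  intro A hA J hJ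
  rcases Finset.mem_insert.1 hA with rfl | hA'
  swap
  · exact hG.2.2 A (Finset.mem_of_mem_erase (Finset.mem_of_mem_erase hA')) J hJ
  -- the merged rectangle
  obtain ⟨kJ, iJ, hJ1, hJ2, hJd⟩ := hG.2.1.1 J hJ
  obtain ⟨a, b, c, d, hd1⟩ := (hG.2.2 _ h1P J hJ).1
  have hLpar : dIcc k₁ (2 * u - 1) ⊆ dIcc (k₁ - 1) u := by
    rw [← sibling_union hk₁ hu1]; exact Set.subset_union_left
  have hLI : dIcc k₁ (2 * u - 1) ⊆ dIcc kI iI := hLpar.trans hparsub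
  -- data agreement on any admissible fine strip
  have key : ∀ k' s' : ℕ, n₀ ≤ k' → 1 ≤ s' → s' ≤ 2 ^ k' → dIcc k' s' ⊆ J →
      ∀ p ∈ dIcc kI iI ×ˢ dIcc k' s',
        f p = ((2:ℝ) ^ a * p.1 + c, (2:ℝ) ^ b * p.2 + d) := by
    intro k' s' hk'n hs1 hs2 hsJ
    obtain ⟨a', b', c', d', hd'⟩ := (h k' hk'n s' hs1 hs2).1
    set x₁ : ℝ := ((2 * u - 1 : ℕ) - 1 : ℝ) / 2 ^ k₁ with hx₁
    set x₂ : ℝ := ((2 * u - 1 : ℕ) : ℝ) / 2 ^ k₁ with hx₂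
    set y₁ : ℝ := ((s' : ℕ) - 1 : ℝ) / 2 ^ k' with hy₁
    set y₂ : ℝ := ((s' : ℕ) : ℝ) / 2 ^ k' with hy₂
    have hxne : x₁ ≠ x₂ := (dlo_lt_dhi k₁ (2 * u - 1)).ne
    have hyne : y₁ ≠ y₂ := (dlo_lt_dhi k' s').ne
    have hx₁L : x₁ ∈ dIcc k₁ (2 * u - 1) := Set.left_mem_Icc.2 (dlo_lt_dhi k₁ (2 * u - 1)).le
    have hx₂L : x₂ ∈ dIcc k₁ (2 * u - 1) := Set.right_mem_Icc.2 (dlo_lt_dhi k₁ (2 * u - 1)).le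
    have hy₁K : y₁ ∈ dIcc k' s' := Set.left_mem_Icc.2 (dlo_lt_dhi k' s').le
    have hy₂K : y₂ ∈ dIcc k' s' := Set.right_mem_Icc.2 (dlo_lt_dhi k' s').le
    have ev : ∀ x ∈ dIcc k₁ (2 * u - 1), ∀ y ∈ dIcc k' s',
        ((2:ℝ) ^ a' * x + c', (2:ℝ) ^ b' * y + d') =
          ((2:ℝ) ^ a * x + c, (2:ℝ) ^ b * y + d) := by
      intro x hx y hy
      have e1 : f (x, y) = ((2:ℝ) ^ a * x + c, (2:ℝ) ^ b * y + d) :=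
        hd1 (x, y) ⟨hx, hsJ hy⟩
      have e2 : f (x, y) = ((2:ℝ) ^ a' * x + c', (2:ℝ) ^ b' * y + d') :=
        hd' (x, y) ⟨hLI hx, hy⟩
      exact e2.symm.trans e1
    have c1 := Prod.ext_iff.1 (ev x₁ hx₁L y₁ hy₁K)
    have c2 := Prod.ext_iff.1 (ev x₂ hx₂L y₁ hy₁K)
    have c3 := Prod.ext_iff.1 (ev x₁ hx₁L y₂ hy₂K)
    obtain ⟨haa, hcc⟩ := affine_data_unique hxne c1.1 c2.1
    obtain ⟨hbb, hdd⟩ := affine_data_unique hyne c1.2 c3.2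
    intro p hp
    rw [hd' p hp, haa, hcc, hbb, hdd]
  have haffpar : ∀ p ∈ dIcc (k₁ - 1) u ×ˢ J,
      f p = ((2:ℝ) ^ a * p.1 + c, (2:ℝ) ^ b * p.2 + d) := by
    intro p hp
    have hp2 : p.2 ∈ dIcc kJ iJ := by rw [← hJd]; exact hp.2
    obtain ⟨s', hs1, hs2, hys, hsubJ⟩ :=
      exists_thin hJ1 hJ2 (le_max_right n₀ kJ) hp2
    exact key (max n₀ kJ) s' (le_max_left _ _) hs1 hs2 (by rw [hJd]; exact hsubJ)
      p ⟨hparsub hp.1, hys⟩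
  constructor
  · exact ⟨a, b, c, d, haffpar⟩
  · -- the image is a dyadic rectangle
    obtain ⟨s₀, hs01, hs02, hy0, hsub0⟩ :=
      exists_thin hJ1 hJ2 (le_max_right n₀ kJ)
        (Set.left_mem_Icc.2 (dlo_lt_dhi kJ iJ).le)
    have hkey0 := key (max n₀ kJ) s₀ (le_max_left _ _) hs01 hs02 (by rw [hJd]; exact hsub0)
    have him0 : f '' (dIcc kI iI ×ˢ dIcc (max n₀ kJ) s₀) =
        ((fun x => (2:ℝ) ^ a * x + c) '' dIcc kI iI) ×ˢ
          ((fun y => (2:ℝ) ^ b * y + d) '' dIcc (max n₀ kJ) s₀) :=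
      image_prod_affine hkey0
    obtain ⟨U, V, hU, hV, hUV⟩ := (h (max n₀ kJ) (le_max_left _ _) s₀ hs01 hs02).2
    obtain ⟨kU, iU, hU1, hU2, hUd⟩ := hU
    have hpe : ((fun x => (2:ℝ) ^ a * x + c) '' dIcc kI iI) ×ˢ
        ((fun y => (2:ℝ) ^ b * y + d) '' dIcc (max n₀ kJ) s₀) = U ×ˢ V := by
      rw [← him0, hUV]
    have hne0 : (((fun x => (2:ℝ) ^ a * x + c) '' dIcc kI iI) ×ˢ
        ((fun y => (2:ℝ) ^ b * y + d) '' dIcc (max n₀ kJ) s₀)).Nonempty :=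
      Set.Nonempty.prod (Set.Nonempty.image _ (dIcc_nonempty _ _))
        (Set.Nonempty.image _ (dIcc_nonempty _ _))
    obtain ⟨heU, _⟩ := (Set.prod_eq_prod_iff_of_nonempty hne0).1 hpe
    have hgI : (fun x => (2:ℝ) ^ a * x + c) '' dIcc kI iI = dIcc kU iU := by
      rw [heU, hUd]
    have hdyg : IsDyadicInterval ((fun x => (2:ℝ) ^ a * x + c) '' dIcc (k₁ - 1) u) :=
      image_dyadic_sub hU1 hU2 hgI hparsub
    -- second factor from the rectangle over L × J
    obtain ⟨U₁, V₁, hU₁, hV₁, hUV₁⟩ := (hG.2.2 _ h1P J hJ).2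
    have him1 : f '' (dIcc k₁ (2 * u - 1) ×ˢ J) =
        ((fun x => (2:ℝ) ^ a * x + c) '' dIcc k₁ (2 * u - 1)) ×ˢ
          ((fun y => (2:ℝ) ^ b * y + d) '' J) :=
      image_prod_affine hd1
    have hpe1 : ((fun x => (2:ℝ) ^ a * x + c) '' dIcc k₁ (2 * u - 1)) ×ˢ
        ((fun y => (2:ℝ) ^ b * y + d) '' J) = U₁ ×ˢ V₁ := by
      rw [← him1, hUV₁]
    have hne1 : (((fun x => (2:ℝ) ^ a * x + c) '' dIcc k₁ (2 * u - 1)) ×ˢ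
        ((fun y => (2:ℝ) ^ b * y + d) '' J)).Nonempty :=
      Set.Nonempty.prod (Set.Nonempty.image _ (dIcc_nonempty _ _))
        (Set.Nonempty.image _ (by rw [hJd]; exact dIcc_nonempty _ _))
    obtain ⟨_, heV⟩ := (Set.prod_eq_prod_iff_of_nonempty hne1).1 hpe1
    exact ⟨_, _, hdyg, heV ▸ hV₁, image_prod_affine haffpar⟩


open Classical in
lemma grid_bwd {f : ℝ × ℝ → ℝ × ℝ} {P Q : Finset (Set ℝ)} (hG : GridRep f P Q)
    (hnv : ¬ VertReducible f P Q) {I : Set ℝ} (hI : IsDyadicInterval I)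
    (h : ∃ n₀ : ℕ, ∀ k ≥ n₀, ∀ i : ℕ, 1 ≤ i → i ≤ 2 ^ k →
      DyadicAffineOn f (I ×ˢ dIcc k i) ∧ IsDyadicRect (f '' (I ×ˢ dIcc k i))) :
    ∃ I' ∈ P, I ⊆ I' := by
  classical
  by_contra hcon
  push_neg at hcon
  obtain ⟨kI, iI, hiI1, hiI2, rfl⟩ := hI
  obtain ⟨n₀, hn⟩ := h
  -- every member overlapping I is contained in I
  have hclaim : ∀ M ∈ P, (interior (dIcc kI iI) ∩ interior M).Nonempty → M ⊆ dIcc kI iI := by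
    intro M hM hov
    obtain ⟨hM1, hM2, hMd⟩ := depth_spec (hG.1.1 M hM)
    rcases le_total (depth M) kI with hle | hle
    · exfalso
      refine hcon M hM ?_
      rw [hMd] at hov ⊢
      exact dIcc_subset_of_overlap hle hov
    · rw [hMd] at hov ⊢
      exact dIcc_subset_of_overlap hle (by obtain ⟨y, h1, h2⟩ := hov; exact ⟨y, h2, h1⟩)
  have hex : ∃ M ∈ P, M ⊆ dIcc kI iI := by
    obtain ⟨M, hM, hov⟩ := exists_overlap hG.1 hiI1 hiI2
    exact ⟨M, hM, hclaim M hM hov⟩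
  set F := P.filter (fun M => M ⊆ dIcc kI iI) with hF
  have hFne : F.Nonempty := by
    obtain ⟨M, hM, hs⟩ := hex
    exact ⟨M, Finset.mem_filter.2 ⟨hM, hs⟩⟩
  obtain ⟨I₁, hI₁F, hmax⟩ := F.exists_max_image depth hFne
  have hI₁P : I₁ ∈ P := (Finset.mem_filter.1 hI₁F).1
  have hI₁I : I₁ ⊆ dIcc kI iI := (Finset.mem_filter.1 hI₁F).2
  obtain ⟨hidx1, hidx2, hI₁d⟩ := depth_spec (hG.1.1 I₁ hI₁P)
  set k₁ := depth I₁ with hk₁def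
  set s := idx I₁ with hsdef
  have hkIk₁ : kI ≤ k₁ := dIcc_subset_le (hI₁d ▸ hI₁I)
  have hne' : k₁ ≠ kI := by
    intro he
    apply hcon I₁ hI₁P
    have h6 : dIcc k₁ s ⊆ dIcc kI iI := hI₁d ▸ hI₁I
    rw [he] at h6
    rw [hI₁d, he, dIcc_subset_same h6]
  have hk₁1 : 1 ≤ k₁ := by omega
  obtain ⟨u, hu1, hcase⟩ : ∃ u, 1 ≤ u ∧ (s = 2 * u - 1 ∨ s = 2 * u) :=
    ⟨(s + 1) / 2, by omega, by omega⟩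
  have h2 : (2:ℕ) ^ k₁ = 2 * 2 ^ (k₁ - 1) := two_pow_pred_nat hk₁1
  have hu2 : u ≤ 2 ^ (k₁ - 1) := by
    obtain ⟨A, hA⟩ : ∃ A, (2:ℕ) ^ (k₁ - 1) = A := ⟨_, rfl⟩
    rw [hA] at h2 ⊢
    rw [h2] at hidx2
    rcases hcase with hc | hc <;> omega
  have hLpar : dIcc k₁ (2 * u - 1) ⊆ dIcc (k₁ - 1) u := by
    rw [← sibling_union hk₁1 hu1]; exact Set.subset_union_left
  have hRpar : dIcc k₁ (2 * u) ⊆ dIcc (k₁ - 1) u := by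
    rw [← sibling_union hk₁1 hu1]; exact Set.subset_union_right
  have hI₁par : I₁ ⊆ dIcc (k₁ - 1) u := by
    rcases hcase with hc | hc
    · rw [hI₁d, hc]; exact hLpar
    · rw [hI₁d, hc]; exact hRpar
  have hparI : dIcc (k₁ - 1) u ⊆ dIcc kI iI := by
    apply dIcc_subset_of_overlap (by omega : kI ≤ k₁ - 1)
    obtain ⟨y, hy⟩ := interior_dIcc_nonempty k₁ s
    refine ⟨y, ?_, ?_⟩
    · exact interior_mono (hI₁d ▸ hI₁par) hy
    · exact interior_mono (hI₁d ▸ hI₁I) hy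
  -- sibling membership
  have hsib : ∀ w : ℕ, 1 ≤ w → w ≤ 2 ^ k₁ → w ≠ s → dIcc k₁ w ⊆ dIcc (k₁ - 1) u →
      dIcc k₁ w ∈ P := by
    intro w hw1 hw2 hws hwpar
    obtain ⟨M, hM, hovS⟩ := exists_overlap hG.1 hw1 hw2
    obtain ⟨hM1, hM2, hMd⟩ := depth_spec (hG.1.1 M hM)
    have hMI : M ⊆ dIcc kI iI := by
      apply hclaim M hM
      obtain ⟨y, hy1, hy2⟩ := hovS
      exact ⟨y, interior_mono (hwpar.trans hparI) hy1, hy2⟩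
    have hMF : M ∈ F := Finset.mem_filter.2 ⟨hM, hMI⟩
    have hdM : depth M ≤ k₁ := hmax M hMF
    have hSM : dIcc k₁ w ⊆ M := by
      rw [hMd]
      rw [hMd] at hovS
      exact dIcc_subset_of_overlap hdM hovS
    rcases eq_or_lt_of_le hdM with heq | hlt
    · have hSM' : dIcc k₁ w ⊆ dIcc k₁ (idx M) := by
        have h7 := hSM
        rw [hMd, heq] at h7
        exact h7
      have hMw : M = dIcc k₁ w := by
        rw [hMd, heq, dIcc_subset_same hSM']
      exact hMw ▸ hM
    · have hdM' : depth M ≤ k₁ - 1 := by omega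
      obtain ⟨y, hy⟩ := interior_dIcc_nonempty k₁ w
      have hyM : y ∈ interior M := interior_mono hSM hy
      have hparM : dIcc (k₁ - 1) u ⊆ M := by
        rw [hMd] at hyM ⊢
        exact dIcc_subset_of_overlap hdM' ⟨y, interior_mono hwpar hy, hyM⟩
      have hI₁M : I₁ = M := by
        apply partition_eq hG.1 hI₁P hM
        obtain ⟨z, hz⟩ := interior_dIcc_nonempty k₁ s
        have hz' : z ∈ interior I₁ := by rw [hI₁d]; exact hz
        exact ⟨z, hz', interior_mono (hI₁par.trans hparM) hz'⟩
      exfalso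
      have h5 : dIcc k₁ w ⊆ dIcc k₁ s := by
        rw [← hI₁M] at hSM
        rw [hI₁d] at hSM
        exact hSM
      exact hws (dIcc_subset_same h5)
  -- build the reduction, contradicting irreducibility
  apply hnv
  rcases hcase with hc | hc
  · -- I₁ is a left child; its sibling is the right child
    have hI₁L : I₁ = dIcc k₁ (2 * u - 1) := by rw [hI₁d, hc]
    have hR2 : 2 * u ≤ 2 ^ k₁ := by
      obtain ⟨A, hA⟩ : ∃ A, (2:ℕ) ^ (k₁ - 1) = A := ⟨_, rfl⟩
      rw [hA] at h2
      rw [h2] at hidx2 ⊢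
      omega
    have hRP : dIcc k₁ (2 * u) ∈ P := hsib (2 * u) (by omega) hR2 (by omega) hRpar
    refine ⟨I₁, hI₁P, dIcc k₁ (2 * u), hRP, ?_, ?_, ?_⟩
    · rw [hI₁L]
      intro heq
      have := (dIcc_inj heq).2
      omega
    · rw [hI₁L, sibling_union hk₁1 hu1]
      exact ⟨k₁ - 1, u, hu1, hu2, rfl⟩
    · rw [hI₁L, sibling_union hk₁1 hu1]
      exact merged_grid hG hiI1 hiI2 hn hk₁1 hu1 hu2 (hI₁L ▸ hI₁P) hRP hparI
  · -- I₁ is a right child; its sibling is the left child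
    have hI₁R : I₁ = dIcc k₁ (2 * u) := by rw [hI₁d, hc]
    have hL2 : 2 * u - 1 ≤ 2 ^ k₁ := by
      obtain ⟨A, hA⟩ : ∃ A, (2:ℕ) ^ (k₁ - 1) = A := ⟨_, rfl⟩
      rw [hA] at h2
      rw [h2] at hidx2 ⊢
      omega
    have hLP : dIcc k₁ (2 * u - 1) ∈ P := hsib (2 * u - 1) (by omega) hL2 (by omega) hLpar
    refine ⟨I₁, hI₁P, dIcc k₁ (2 * u - 1), hLP, ?_, ?_, ?_⟩
    · rw [hI₁R]
      intro heq
      have := (dIcc_inj heq).2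
      omega
    · rw [hI₁R, Set.union_comm, sibling_union hk₁1 hu1]
      exact ⟨k₁ - 1, u, hu1, hu2, rfl⟩
    · rw [hI₁R, Set.union_comm, sibling_union hk₁1 hu1, erase_swap' P _ _]
      exact merged_grid hG hiI1 hiI2 hn hk₁1 hu1 hu2 hLP (hI₁R ▸ hI₁P) hparI


lemma charP {f : ℝ × ℝ → ℝ × ℝ} {P Q : Finset (Set ℝ)} (hred : ReducedGridRep f P Q)
    {I : Set ℝ} (hI : IsDyadicInterval I) :
    (∃ I' ∈ P, I ⊆ I') ↔
      ∃ n₀ : ℕ, ∀ k ≥ n₀, ∀ i : ℕ, 1 ≤ i → i ≤ 2 ^ k →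
        DyadicAffineOn f (I ×ˢ dIcc k i) ∧ IsDyadicRect (f '' (I ×ˢ dIcc k i)) :=
  ⟨grid_fwd hred.1 hI, grid_bwd hred.1 hred.2.1 hI⟩

def swapF (f : ℝ × ℝ → ℝ × ℝ) : ℝ × ℝ → ℝ × ℝ := fun p => Prod.swap (f (Prod.swap p))

lemma swapF_swapF (f : ℝ × ℝ → ℝ × ℝ) : swapF (swapF f) = f := by
  funext p
  simp [swapF]

lemma swap_affine {f : ℝ × ℝ → ℝ × ℝ} {X Y : Set ℝ} (h : DyadicAffineOn f (X ×ˢ Y)) :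
    DyadicAffineOn (swapF f) (Y ×ˢ X) := by
  obtain ⟨a, b, c, d, hd⟩ := h
  refine ⟨b, a, d, c, fun p hp => ?_⟩
  have h1 : (p.2, p.1) ∈ X ×ˢ Y := ⟨hp.2, hp.1⟩
  have h2 := hd (p.2, p.1) h1
  show Prod.swap (f (Prod.swap p)) = _
  rw [show Prod.swap p = (p.2, p.1) from rfl, h2]
  rfl

lemma swap_affine_iff {f : ℝ × ℝ → ℝ × ℝ} {X Y : Set ℝ} :
    DyadicAffineOn (swapF f) (Y ×ˢ X) ↔ DyadicAffineOn f (X ×ˢ Y) :=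
  ⟨fun h => by have := swap_affine h; rwa [swapF_swapF] at this, swap_affine⟩

lemma swap_image (f : ℝ × ℝ → ℝ × ℝ) (X Y : Set ℝ) :
    swapF f '' (Y ×ˢ X) = Prod.swap '' (f '' (X ×ˢ Y)) := by
  have h1 : swapF f = Prod.swap ∘ f ∘ Prod.swap := rfl
  rw [h1, Set.image_comp, Set.image_comp, Set.image_swap_prod]

lemma swap_swap_image (S : Set (ℝ × ℝ)) : Prod.swap '' (Prod.swap '' S) = S := by
  rw [Set.image_image]
  simp

lemma swap_rect {R : Set (ℝ × ℝ)} (h : IsDyadicRect R) : IsDyadicRect (Prod.swap '' R) := by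
  obtain ⟨U, V, hU, hV, rfl⟩ := h
  exact ⟨V, U, hV, hU, Set.image_swap_prod U V⟩

lemma swap_rect_iff {f : ℝ × ℝ → ℝ × ℝ} {X Y : Set ℝ} :
    IsDyadicRect (swapF f '' (Y ×ˢ X)) ↔ IsDyadicRect (f '' (X ×ˢ Y)) := by
  rw [swap_image]
  constructor
  · intro h
    have := swap_rect h
    rwa [swap_swap_image] at this
  · exact swap_rect

lemma swap_grid {f : ℝ × ℝ → ℝ × ℝ} {P Q : Finset (Set ℝ)} (h : GridRep f P Q) :
    GridRep (swapF f) Q P := by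
  refine ⟨h.2.1, h.1, fun J hJ I hI => ?_⟩
  obtain ⟨ha, hr⟩ := h.2.2 I hI J hJ
  exact ⟨swap_affine ha, by rw [swap_image]; exact swap_rect hr⟩

lemma swap_reduced {f : ℝ × ℝ → ℝ × ℝ} {P Q : Finset (Set ℝ)} (h : ReducedGridRep f P Q) :
    ReducedGridRep (swapF f) Q P := by
  refine ⟨swap_grid h.1, ?_, ?_⟩
  · rintro ⟨J₁, hJ₁, J₂, hJ₂, hne, hdy, hgr⟩
    exact h.2.2 ⟨J₁, hJ₁, J₂, hJ₂, hne, hdy,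
      by have := swap_grid hgr; rwa [swapF_swapF] at this⟩
  · rintro ⟨I₁, hI₁, I₂, hI₂, hne, hdy, hgr⟩
    exact h.2.1 ⟨I₁, hI₁, I₂, hI₂, hne, hdy,
      by have := swap_grid hgr; rwa [swapF_swapF] at this⟩

lemma charQ {f : ℝ × ℝ → ℝ × ℝ} {P Q : Finset (Set ℝ)} (hred : ReducedGridRep f P Q)
    {J : Set ℝ} (hJ : IsDyadicInterval J) :
    (∃ J' ∈ Q, J ⊆ J') ↔
      ∃ n₀ : ℕ, ∀ k ≥ n₀, ∀ i : ℕ, 1 ≤ i → i ≤ 2 ^ k →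
        DyadicAffineOn f (dIcc k i ×ˢ J) ∧ IsDyadicRect (f '' (dIcc k i ×ˢ J)) := by
  constructor
  · intro hx
    obtain ⟨n₀, hn⟩ := (charP (swap_reduced hred) hJ).1 hx
    exact ⟨n₀, fun k hk i h1 h2 =>
      ⟨swap_affine_iff.1 (hn k hk i h1 h2).1, swap_rect_iff.1 (hn k hk i h1 h2).2⟩⟩
  · rintro ⟨n₀, hn⟩
    apply (charP (swap_reduced hred) hJ).2
    exact ⟨n₀, fun k hk i h1 h2 =>
      ⟨swap_affine_iff.2 (hn k hk i h1 h2).1, swap_rect_iff.2 (hn k hk i h1 h2).2⟩⟩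

lemma interior_nonempty_of_dyadic {A : Set ℝ} (h : IsDyadicInterval A) :
    (interior A).Nonempty := by
  obtain ⟨k, i, _, _, rfl⟩ := h
  exact interior_dIcc_nonempty k i

lemma uniqP {f : ℝ × ℝ → ℝ × ℝ} {P Q P' Q' : Finset (Set ℝ)}
    (h : ReducedGridRep f P Q) (h' : ReducedGridRep f P' Q') : P = P' := by
  have step : ∀ {P₁ Q₁ P₂ Q₂ : Finset (Set ℝ)}, ReducedGridRep f P₁ Q₁ →
      ReducedGridRep f P₂ Q₂ → ∀ A ∈ P₁, ∃ A' ∈ P₂, A ⊆ A' := by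
    intro P₁ Q₁ P₂ Q₂ h1 h2 A hA
    exact (charP h2 (h1.1.1.1 A hA)).2 ((charP h1 (h1.1.1.1 A hA)).1 ⟨A, hA, subset_rfl⟩)
  have main : ∀ {P₁ Q₁ P₂ Q₂ : Finset (Set ℝ)}, ReducedGridRep f P₁ Q₁ →
      ReducedGridRep f P₂ Q₂ → P₁ ⊆ P₂ := by
    intro P₁ Q₁ P₂ Q₂ h1 h2
    intro A hA
    obtain ⟨A', hA', hAA'⟩ := step h1 h2 A hA
    obtain ⟨A'', hA'', hA'A''⟩ := step h2 h1 A' hA'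
    have hAeq : A = A'' := by
      apply partition_eq h1.1.1 hA hA''
      obtain ⟨y, hy⟩ := interior_nonempty_of_dyadic (h1.1.1.1 A hA)
      exact ⟨y, hy, interior_mono (hAA'.trans hA'A'') hy⟩
    have : A' = A := Set.Subset.antisymm (hAeq ▸ hA'A'') hAA'
    exact this ▸ hA'
  exact Finset.Subset.antisymm (main h h') (main h' h)

lemma uniqQ {f : ℝ × ℝ → ℝ × ℝ} {P Q P' Q' : Finset (Set ℝ)}
    (h : ReducedGridRep f P Q) (h' : ReducedGridRep f P' Q') : Q = Q' :=
  uniqP (swap_reduced h) (swap_reduced h')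

theorem stmt17 (f : ℝ × ℝ → ℝ × ℝ) (P Q : Finset (Set ℝ))
    (hred : ReducedGridRep f P Q) :
    (∀ I : Set ℝ, IsDyadicInterval I →
      ((∃ I' ∈ P, I ⊆ I') ↔
        ∃ n₀ : ℕ, ∀ k ≥ n₀, ∀ i : ℕ, 1 ≤ i → i ≤ 2 ^ k →
          DyadicAffineOn f (I ×ˢ dIcc k i) ∧ IsDyadicRect (f '' (I ×ˢ dIcc k i)))) ∧
    ∀ P' Q' : Finset (Set ℝ), ReducedGridRep f P' Q' → P = P' ∧ Q = Q' := by
  exact ⟨fun I hI => charP hred hI, fun P' Q' hred' => ⟨uniqP hred hred', uniqQ hred hred'⟩⟩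
end

section
/- If an element x of 2V admits a diagram using a source partition into N basic dyadic rectangles, then it admits a grid diagram whose source partition has at most N² rectangles. Hence M(x) ≤ N(x)², where N(x) is the minimal number of rectangles over all diagrams for x and M(x) is the number of rectangles in the reduced grid diagram. -/
namespace S18
open Set

/-- Internal explicit description of a dyadic interval. -/
def Dy (k i : ℕ) (I : Set ℝ) : Prop :=
  1 ≤ i ∧ i ≤ 2 ^ k ∧ I = Set.Icc (((i : ℝ) - 1) / 2 ^ k) ((i : ℝ) / 2 ^ k)

lemma isDyadic_iff {I : Set ℝ} : IsDyadicInterval I ↔ ∃ k i, Dy k i I := Iff.rfl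

lemma two_pow_pos (k : ℕ) : (0:ℝ) < 2 ^ k := by positivity

lemma div_le_div_P {x y c : ℝ} (hc : 0 < c) : x / c ≤ y / c ↔ x ≤ y := by
  rw [div_le_div_iff₀ hc hc]
  exact ⟨fun h => le_of_mul_le_mul_right h hc, fun h => mul_le_mul_of_nonneg_right h hc.le⟩

lemma Dy.lt {k i : ℕ} {I : Set ℝ} (h : Dy k i I) :
    ((i : ℝ) - 1) / 2 ^ k < (i : ℝ) / 2 ^ k := by
  have h2 := two_pow_pos k
  rw [div_lt_div_iff₀ h2 h2]; nlinarith

lemma Dy.eqIcc {k i : ℕ} {I : Set ℝ} (h : Dy k i I) :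
    I = Set.Icc (((i : ℝ) - 1) / 2 ^ k) ((i : ℝ) / 2 ^ k) := h.2.2

lemma Dy.nonempty {k i : ℕ} {I : Set ℝ} (h : Dy k i I) : I.Nonempty := by
  rw [h.eqIcc]; exact nonempty_Icc.mpr h.lt.le

lemma Dy.subset_unit {k i : ℕ} {I : Set ℝ} (h : Dy k i I) : I ⊆ Set.Icc (0:ℝ) 1 := by
  rw [h.eqIcc]
  apply Icc_subset_Icc
  · apply div_nonneg _ (two_pow_pos k).le
    have : (1:ℝ) ≤ (i:ℝ) := by exact_mod_cast h.1
    linarith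
  · rw [div_le_one (two_pow_pos k)]
    exact_mod_cast h.2.1

lemma Dy.int_eq {k i : ℕ} {I : Set ℝ} (h : Dy k i I) :
    interior I = Set.Ioo (((i : ℝ) - 1) / 2 ^ k) ((i : ℝ) / 2 ^ k) := by
  rw [h.eqIcc, interior_Icc]

lemma Dy.interior_nonempty {k i : ℕ} {I : Set ℝ} (h : Dy k i I) :
    (interior I).Nonempty := by
  rw [h.int_eq]; exact nonempty_Ioo.mpr h.lt

lemma Dy.isClosed {k i : ℕ} {I : Set ℝ} (h : Dy k i I) : IsClosed I := by
  rw [h.eqIcc]; exact isClosed_Icc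

lemma Icc_eq_Icc {a b c d : ℝ} (hab : a ≤ b) (h : Set.Icc a b = Set.Icc c d) :
    a = c ∧ b = d := by
  have h1 : a ∈ Set.Icc c d := h ▸ left_mem_Icc.2 hab
  have h2 : b ∈ Set.Icc c d := h ▸ right_mem_Icc.2 hab
  have hcd : c ≤ d := le_trans h1.1 h1.2
  have h3 : c ∈ Set.Icc a b := h.symm ▸ left_mem_Icc.2 hcd
  have h4 : d ∈ Set.Icc a b := h.symm ▸ right_mem_Icc.2 hcd
  exact ⟨le_antisymm h3.1 h1.1, le_antisymm h2.2 h4.2⟩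

lemma pow_eq_pow_nat {k l : ℕ} (h : (2:ℝ) ^ k = 2 ^ l) : k = l := by
  have : (2:ℕ) ^ k = 2 ^ l := by exact_mod_cast h
  exact Nat.pow_right_injective (le_refl 2) this

lemma Dy.len_eq {k i : ℕ} {I : Set ℝ} (h : Dy k i I) :
    (i:ℝ)/2^k - ((i:ℝ)-1)/2^k = 1/2^k := by
  rw [div_sub_div_same]; norm_num

lemma Dy.unique {k i l j : ℕ} {I : Set ℝ} (h : Dy k i I) (h' : Dy l j I) :
    k = l ∧ i = j := by
  have heq := h'.eqIcc ▸ h.eqIcc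
  obtain ⟨e1, e2⟩ := Icc_eq_Icc h.lt.le heq.symm
  have hkp := (two_pow_pos k); have hlp := (two_pow_pos l)
  have hone : (1:ℝ)/2^k = 1/2^l := by
    have l1 := h.len_eq; have l2 := h'.len_eq; linarith
  have hpow : (2:ℝ)^l = 2^k := by
    rw [div_eq_div_iff hkp.ne' hlp.ne'] at hone; linarith
  have hkl : k = l := (pow_eq_pow_nat hpow).symm
  subst hkl
  have e2' : (i:ℝ) = j := by
    rw [div_eq_div_iff hkp.ne' hkp.ne'] at e2
    exact mul_right_cancel₀ hkp.ne' e2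
  exact ⟨rfl, by exact_mod_cast e2'⟩

lemma Dy.subset_iff {k i l j : ℕ} {I J : Set ℝ} (h : Dy k i I) (h' : Dy l j J) :
    I ⊆ J ↔ (((j:ℝ)-1)/2^l ≤ ((i:ℝ)-1)/2^k ∧ (i:ℝ)/2^k ≤ (j:ℝ)/2^l) := by
  rw [h.eqIcc, h'.eqIcc, Icc_subset_Icc_iff h.lt.le]

lemma Dy.level_le_of_subset {k i l j : ℕ} {I J : Set ℝ} (h : Dy k i I) (h' : Dy l j J)
    (hs : I ⊆ J) : l ≤ k := by
  obtain ⟨e1, e2⟩ := (h.subset_iff h').mp hs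
  have hlen : (1:ℝ)/2^k ≤ 1/2^l := by
    have := h.len_eq; have := h'.len_eq; linarith
  have : (2:ℝ)^l ≤ 2^k := by
    have hkp := two_pow_pos k; have hlp := two_pow_pos l
    rw [div_le_div_iff₀ hkp hlp] at hlen; linarith
  have : (2:ℕ)^l ≤ 2^k := by exact_mod_cast this
  exact Nat.pow_le_pow_iff_right (by norm_num) |>.mp this

lemma Dy.eq_of_subset_level {k i j : ℕ} {I J : Set ℝ} (h : Dy k i I) (h' : Dy k j J)
    (hs : I ⊆ J) : I = J := by
  obtain ⟨e1, e2⟩ := (h.subset_iff h').mp hs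
  have hkp := two_pow_pos k
  have h1 : (j:ℝ) ≤ (i:ℝ) := by rw [div_le_div_P hkp] at e1; linarith
  have h2 : (i:ℝ) ≤ (j:ℝ) := by rw [div_le_div_P hkp] at e2; linarith
  have hij : (i:ℝ) = j := le_antisymm h2 h1
  rw [h.eqIcc, h'.eqIcc, hij]

lemma div_shift {x : ℝ} {l d : ℕ} : x / 2^l = (x * 2^d) / 2^(l+d) := by
  rw [pow_add]; field_simp

/-- One-sided trichotomy. -/
lemma subset_or_disjoint_aux {k i l j : ℕ} {I J : Set ℝ} (h : Dy k i I) (h' : Dy l j J)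
    (hlk : l ≤ k) : I ⊆ J ∨ interior I ∩ interior J = ∅ := by
  obtain ⟨d, rfl⟩ : ∃ d, k = l + d := ⟨k - l, by omega⟩
  by_cases hc : (i:ℤ) ≤ ((j:ℤ)-1) * 2^d
  · right
    have hcr : (i:ℝ) ≤ ((j:ℝ)-1) * 2^d := by exact_mod_cast hc
    have : (i:ℝ)/2^(l+d) ≤ ((j:ℝ)-1)/2^l := by
      rw [div_shift (l := l) (d := d) (x := (j:ℝ)-1), div_le_div_P (two_pow_pos _)]
      exact hcr
    rw [h.int_eq, h'.int_eq]
    apply eq_empty_iff_forall_notMem.mpr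
    rintro x ⟨⟨_, hx2⟩, ⟨hx3, _⟩⟩; linarith
  by_cases hc2 : (j:ℤ) * 2^d < (i:ℤ)
  · right
    have hcr : (j:ℝ) * 2^d ≤ (i:ℝ) - 1 := by
      have : (j:ℤ) * 2^d ≤ (i:ℤ) - 1 := by omega
      exact_mod_cast this
    have : (j:ℝ)/2^l ≤ ((i:ℝ)-1)/2^(l+d) := by
      rw [div_shift (l := l) (d := d) (x := (j:ℝ)), div_le_div_P (two_pow_pos _)]
      exact hcr
    rw [h.int_eq, h'.int_eq]
    apply eq_empty_iff_forall_notMem.mpr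
    rintro x ⟨⟨hx1, _⟩, ⟨_, hx4⟩⟩; linarith
  · left
    push_neg at hc hc2
    rw [h.subset_iff h']
    constructor
    · rw [div_shift (l := l) (d := d) (x := (j:ℝ)-1), div_le_div_P (two_pow_pos _)]
      have : ((j:ℤ)-1) * 2^d ≤ (i:ℤ) - 1 := by omega
      have := (by exact_mod_cast this : ((j:ℝ)-1) * 2^d ≤ (i:ℝ) - 1)
      linarith
    · rw [div_shift (l := l) (d := d) (x := (j:ℝ)), div_le_div_P (two_pow_pos _)]
      exact_mod_cast hc2

lemma trichotomy {I J : Set ℝ} (h : IsDyadicInterval I) (h' : IsDyadicInterval J) :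
    I ⊆ J ∨ J ⊆ I ∨ interior I ∩ interior J = ∅ := by
  obtain ⟨k, i, h⟩ := h; obtain ⟨l, j, h'⟩ := h'
  rcases le_total l k with hlk | hkl
  · rcases subset_or_disjoint_aux h h' hlk with hs | hd
    · exact Or.inl hs
    · exact Or.inr (Or.inr hd)
  · rcases subset_or_disjoint_aux h' h hkl with hs | hd
    · exact Or.inr (Or.inl hs)
    · exact Or.inr (Or.inr (by rw [inter_comm]; exact hd))



lemma Icc_congr {a b c d : ℝ} (h1 : a = c) (h2 : b = d) :
    Set.Icc a b = Set.Icc c d := by rw [h1, h2]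

open Classical in
noncomputable def lvl (I : Set ℝ) : ℕ := if h : ∃ k i, Dy k i I then h.choose else 0

open Classical in
lemma lvl_spec {k i : ℕ} {I : Set ℝ} (h : Dy k i I) : lvl I = k := by
  unfold lvl
  rw [dif_pos ⟨k, i, h⟩]
  obtain ⟨i', hh⟩ := (⟨k, i, h⟩ : ∃ k i, Dy k i I).choose_spec
  exact (hh.unique h).1

lemma sibling {k i : ℕ} {I : Set ℝ} (h : Dy (k+1) i I) :
    ∃ (i' p : ℕ) (S W : Set ℝ), Dy (k+1) i' S ∧ i' ≠ i ∧ Dy k p W ∧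
      p = (i+1)/2 ∧ p = (i'+1)/2 ∧ I ∪ S = W ∧ interior I ∩ interior S = ∅ := by
  obtain ⟨h1, h2, hI⟩ := h
  have hpk : (2:ℕ)^(k+1) = 2 * 2^k := by ring
  have hD := two_pow_pos (k+1)
  have hDk := two_pow_pos k
  rcases Nat.even_or_odd i with ⟨r, hr⟩ | ⟨r, hr⟩
  · -- i = 2r even, sibling on the left
    have hr1 : 1 ≤ r := by omega
    have hic : ((i:ℕ):ℝ) = 2*(r:ℝ) := by rw [hr]; push_cast; ring
    set i' := 2*r - 1 with hi'def
    have hi'c : ((i':ℕ):ℝ) = 2*(r:ℝ) - 1 := by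
      have hh : (i' : ℕ) + 1 = 2*r := by omega
      have := congrArg (Nat.cast : ℕ → ℝ) hh
      push_cast at this; linarith
    refine ⟨i', r, Set.Icc ((2*(r:ℝ)-2)/2^(k+1)) ((2*(r:ℝ)-1)/2^(k+1)),
      Set.Icc (((r:ℝ)-1)/2^k) ((r:ℝ)/2^k), ⟨by omega, by omega, ?_⟩, by omega,
      ⟨hr1, by omega, rfl⟩, by omega, by omega, ?_, ?_⟩
    · exact (Icc_congr (by rw [hi'c]; ring) (by rw [hi'c])).symm
    · -- union
      have hW2 : Set.Icc (((r:ℝ)-1)/2^k) ((r:ℝ)/2^k)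
          = Set.Icc ((2*(r:ℝ)-2)/2^(k+1)) ((2*(r:ℝ))/2^(k+1)) := by
        apply Icc_congr <;> (rw [pow_succ]; field_simp)
      have hIeq : I = Set.Icc ((2*(r:ℝ)-1)/2^(k+1)) ((2*(r:ℝ))/2^(k+1)) := by
        rw [hI, hic]
      rw [hIeq, hW2, Set.union_comm]
      apply Set.Icc_union_Icc_eq_Icc <;>
        · rw [div_le_div_P hD]; linarith
    · -- interiors disjoint
      have hIeq : I = Set.Icc ((2*(r:ℝ)-1)/2^(k+1)) ((2*(r:ℝ))/2^(k+1)) := by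
        rw [hI, hic]
      rw [hIeq, interior_Icc, interior_Icc]
      apply eq_empty_iff_forall_notMem.mpr
      rintro x ⟨⟨hx1, _⟩, ⟨_, hx4⟩⟩; linarith
  · -- i = 2r+1 odd, sibling on the right
    have hic : ((i:ℕ):ℝ) = 2*(r:ℝ)+1 := by rw [hr]; push_cast; ring
    set i' := i + 1 with hi'def
    have hi'c : ((i':ℕ):ℝ) = 2*(r:ℝ)+2 := by rw [hi'def]; push_cast; rw [hic]; ring
    have hle : i' ≤ 2^(k+1) := by omega
    refine ⟨i', r+1, Set.Icc ((2*(r:ℝ)+1)/2^(k+1)) ((2*(r:ℝ)+2)/2^(k+1)),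
      Set.Icc (((r:ℝ)+1-1)/2^k) (((r:ℝ)+1)/2^k), ⟨by omega, hle, ?_⟩, by omega,
      ⟨by omega, by omega, by push_cast; rfl⟩, by omega, by omega, ?_, ?_⟩
    · exact (Icc_congr (by rw [hi'c]; ring) (by rw [hi'c])).symm
    · have hW2 : Set.Icc (((r:ℝ)+1-1)/2^k) (((r:ℝ)+1)/2^k)
          = Set.Icc ((2*(r:ℝ))/2^(k+1)) ((2*(r:ℝ)+2)/2^(k+1)) := by
        apply Icc_congr <;> (rw [pow_succ]; field_simp) <;> ring
      have hIeq : I = Set.Icc ((2*(r:ℝ))/2^(k+1)) ((2*(r:ℝ)+1)/2^(k+1)) := by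
        rw [hI, hic]; exact Icc_congr (by ring) rfl
      rw [hIeq, hW2]
      apply Set.Icc_union_Icc_eq_Icc <;>
        · rw [div_le_div_P hD]; linarith
    · have hIeq : I = Set.Icc ((2*(r:ℝ))/2^(k+1)) ((2*(r:ℝ)+1)/2^(k+1)) := by
        rw [hI, hic]; exact Icc_congr (by ring) rfl
      rw [hIeq, interior_Icc, interior_Icc]
      apply eq_empty_iff_forall_notMem.mpr
      rintro x ⟨⟨_, hx2⟩, ⟨hx3, _⟩⟩; linarith

lemma parent_subset {k i l j : ℕ} {I J W : Set ℝ} (hI : Dy (k+1) i I) (hJ : Dy l j J)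
    (hIJ : I ⊆ J) (hlk : l ≤ k) (hW : Dy k ((i+1)/2) W) : W ⊆ J := by
  obtain ⟨d, rfl⟩ : ∃ d, k = l + d := ⟨k - l, by omega⟩
  obtain ⟨e1, e2⟩ := (hI.subset_iff hJ).mp hIJ
  have hA : ((j:ℝ)-1) * 2^(d+1) ≤ (i:ℝ) - 1 := by
    rw [div_shift (l := l) (d := d+1) (x := (j:ℝ)-1)] at e1
    exact (div_le_div_P (two_pow_pos _)).mp e1
  have hB : (i:ℝ) ≤ (j:ℝ) * 2^(d+1) := by
    rw [div_shift (l := l) (d := d+1) (x := (j:ℝ))] at e2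
    exact (div_le_div_P (two_pow_pos _)).mp e2
  have hAz : ((j:ℤ)-1) * 2^(d+1) ≤ (i:ℤ) - 1 := by exact_mod_cast hA
  have hBz : (i:ℤ) ≤ (j:ℤ) * 2^(d+1) := by exact_mod_cast hB
  have hgz1 : ((j:ℤ)-1) * 2^d ≤ (((i+1)/2 : ℕ):ℤ) - 1 := by
    have hpz : (((i+1)/2 : ℕ):ℤ) = ((i:ℤ)+1)/2 := by omega
    set q : ℤ := ((j:ℤ)-1) * 2^d with hq
    have h2 : ((j:ℤ)-1) * 2^(d+1) = q * 2 := by rw [hq, pow_succ]; ring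
    rw [h2] at hAz
    omega
  have hgz2 : (((i+1)/2 : ℕ):ℤ) ≤ (j:ℤ) * 2^d := by
    have hpz : (((i+1)/2 : ℕ):ℤ) = ((i:ℤ)+1)/2 := by omega
    set q : ℤ := (j:ℤ) * 2^d with hq
    have h2 : (j:ℤ) * 2^(d+1) = q * 2 := by rw [hq, pow_succ]; ring
    rw [h2] at hBz
    omega
  rw [hW.subset_iff hJ]
  constructor
  · rw [div_shift (l := l) (d := d) (x := (j:ℝ)-1), div_le_div_P (two_pow_pos _)]
    exact_mod_cast hgz1
  · rw [div_shift (l := l) (d := d) (x := (j:ℝ)), div_le_div_P (two_pow_pos _)]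
    exact_mod_cast hgz2

noncomputable def EP (F : Finset (Set ℝ)) : Set ℝ := ⋃ I ∈ F, frontier I

lemma EP_finite {F : Finset (Set ℝ)} (h : ∀ I ∈ F, IsDyadicInterval I) :
    (EP F).Finite := by
  apply Set.Finite.biUnion F.finite_toSet
  intro I hI
  obtain ⟨k, i, hd⟩ := isDyadic_iff.mp (h I hI)
  rw [hd.eqIcc, frontier_Icc hd.lt.le]
  exact (Set.finite_singleton _).insert _

lemma mem_interior_of_not_EP {F : Finset (Set ℝ)} {I : Set ℝ} {t : ℝ}
    (hI : I ∈ F) (hd : IsDyadicInterval I) (ht : t ∈ I) (hE : t ∉ EP F) :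
    t ∈ interior I := by
  obtain ⟨k, i, hd⟩ := isDyadic_iff.mp hd
  have hfr : t ∉ frontier I := fun hf => hE (Set.mem_biUnion hI hf)
  rw [hd.eqIcc, frontier_Icc hd.lt.le] at hfr
  rw [hd.eqIcc] at ht
  rw [hd.int_eq]
  simp only [Set.mem_insert_iff, Set.mem_singleton_iff] at hfr
  push_neg at hfr
  exact ⟨ht.1.lt_of_ne' hfr.1, ht.2.lt_of_ne hfr.2⟩

lemma exists_generic {E : Set ℝ} (hE : E.Finite) {α β : ℝ} (h : α < β) :
    ∃ t, t ∈ Set.Ioo α β ∧ t ∉ E := by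
  obtain ⟨t, ht⟩ := ((Set.Ioo_infinite h).diff hE).nonempty
  exact ⟨t, ht.1, ht.2⟩

lemma Icc_subset_closure {E : Set ℝ} (hE : E.Finite) {α β : ℝ} (h : α < β) :
    Set.Icc α β ⊆ closure (Set.Ioo α β \ E) := by
  intro t ht
  rw [Metric.mem_closure_iff]
  intro ε hε
  have hcd : max α (t - ε/2) < min β (t + ε/2) := by
    simp only [lt_min_iff, max_lt_iff]
    exact ⟨⟨h, by linarith [ht.2]⟩, ⟨by linarith [ht.1], by linarith⟩⟩
  obtain ⟨s, hs, hsE⟩ := exists_generic hE hcd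
  refine ⟨s, ⟨⟨?_, ?_⟩, hsE⟩, ?_⟩
  · exact lt_of_le_of_lt (le_max_left _ _) hs.1
  · exact lt_of_lt_of_le hs.2 (min_le_left _ _)
  · rw [Real.dist_eq, abs_sub_lt_iff]
    have h1 := lt_of_le_of_lt (le_max_right _ _) hs.1
    have h2 := lt_of_lt_of_le hs.2 (min_le_right _ _)
    constructor <;> linarith

lemma not_mem_interior_of_disjoint {I I' : Set ℝ} (hd : IsDyadicInterval I)
    (hd' : IsDyadicInterval I') (hdis : interior I ∩ interior I' = ∅)
    {x : ℝ} (hx : x ∈ I) (hx' : x ∈ interior I') : False := by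
  obtain ⟨k, i, hd⟩ := isDyadic_iff.mp hd; obtain ⟨l, j, hd'⟩ := isDyadic_iff.mp hd'
  have hab := hd.lt; have hab' := hd'.lt
  rw [hd.eqIcc] at hx; rw [hd'.int_eq] at hx'
  rw [hd.int_eq, hd'.int_eq] at hdis
  set a := ((i:ℝ)-1)/2^k with ha; set b := (i:ℝ)/2^k with hb
  set a' := ((j:ℝ)-1)/2^l with ha'; set b' := (j:ℝ)/2^l with hb'
  obtain ⟨h1, h2⟩ := hx; obtain ⟨h3, h4⟩ := hx'
  have hm : max a a' < min b b' := by
    simp only [lt_min_iff, max_lt_iff]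
    exact ⟨⟨hab, by linarith⟩, ⟨by linarith, hab'⟩⟩
  set m := (max a a' + min b b')/2 with hmdef
  have hm1 : max a a' < m := by rw [hmdef]; linarith
  have hm2 : m < min b b' := by rw [hmdef]; linarith
  have hmem : m ∈ Set.Ioo a b ∩ Set.Ioo a' b' := by
    constructor
    · exact ⟨lt_of_le_of_lt (le_max_left _ _) hm1, lt_of_lt_of_le hm2 (min_le_left _ _)⟩
    · exact ⟨lt_of_le_of_lt (le_max_right _ _) hm1, lt_of_lt_of_le hm2 (min_le_right _ _)⟩
  rw [hdis] at hmem
  exact hmem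

lemma affine_image_Icc {p q α β : ℝ} (hp : 0 < p) (hab : α ≤ β) :
    (fun x => p*x + q) '' Set.Icc α β = Set.Icc (p*α+q) (p*β+q) := by
  ext z
  simp only [Set.mem_image, Set.mem_Icc]
  constructor
  · rintro ⟨x, ⟨h1, h2⟩, rfl⟩
    constructor <;> nlinarith
  · rintro ⟨h1, h2⟩
    refine ⟨(z - q)/p, ⟨?_, ?_⟩, by field_simp; ring⟩
    · rw [le_div_iff₀ hp]; linarith
    · rw [div_le_iff₀ hp]; linarith

lemma affine_coeff_eq {a a' : ℤ} {c c' α β : ℝ} (hab : α < β)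
    (h : ∀ x ∈ Set.Icc α β, (2:ℝ)^a * x + c = 2^a' * x + c') : a = a' ∧ c = c' := by
  have h1 := h α (Set.left_mem_Icc.2 hab.le)
  have h2 := h β (Set.right_mem_Icc.2 hab.le)
  have hpow : (2:ℝ)^a = 2^a' := by
    have h3 : (2:ℝ)^a * (β - α) = 2^a' * (β - α) := by ring_nf; nlinarith [h1, h2]
    exact mul_right_cancel₀ (sub_ne_zero.mpr hab.ne') h3
  have ha : a = a' := zpow_right_injective₀ (by norm_num) (by norm_num) hpow
  refine ⟨ha, ?_⟩
  rw [hpow] at h1; linarith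

lemma affine_sub_dyadic {a : ℤ} {c : ℝ} {k i k' i' m j : ℕ} {K K' M : Set ℝ}
    (hK : Dy k i K) (hK' : Dy k' i' K') (hM : Dy m j M) (hMK : M ⊆ K)
    (him : (fun x => (2:ℝ)^a * x + c) '' K = K') :
    IsDyadicInterval ((fun x => (2:ℝ)^a * x + c) '' M) := by
  have hp : (0:ℝ) < (2:ℝ)^a := zpow_pos (by norm_num) a
  have himE := him
  rw [hK.eqIcc, affine_image_Icc hp hK.lt.le, hK'.eqIcc] at himE
  obtain ⟨E1, E2⟩ := Icc_eq_Icc (by nlinarith [hK.lt] :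
    (2:ℝ)^a * (((i:ℝ)-1)/2^k) + c ≤ 2^a * ((i:ℝ)/2^k) + c) himE
  have hkm : k ≤ m := hM.level_le_of_subset hK hMK
  obtain ⟨d, rfl⟩ : ∃ d, m = k + d := ⟨m - k, by omega⟩
  have hEq : (2:ℝ)^a = 2^k / 2^(k':ℕ) := by
    have l1 := hK.len_eq; have l2 := hK'.len_eq
    have h5 : (2:ℝ)^a * ((i:ℝ)/2^k - ((i:ℝ)-1)/2^k) = 1/2^(k':ℕ) := by
      rw [mul_sub]; linarith
    rw [l1] at h5
    rw [eq_div_iff (two_pow_pos k').ne']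
    have hk0 := (two_pow_pos k).ne'
    field_simp at h5
    linarith
  have hc : c = ((i':ℝ)-1)/2^(k':ℕ) - (2:ℝ)^a * (((i:ℝ)-1)/2^k) := by linarith
  rw [hM.eqIcc, affine_image_Icc hp hM.lt.le]
  set J' : ℤ := (j:ℤ) + ((i':ℤ) - (i:ℤ)) * 2^d with hJ'def
  have hJr : ((J':ℤ):ℝ) = (j:ℝ) + ((i':ℝ) - (i:ℝ)) * 2^d := by
    rw [hJ'def]; push_cast; ring
  have hk0 := (two_pow_pos k).ne'
  have hk'0 := (two_pow_pos k').ne'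
  have hd0 := (two_pow_pos d).ne'
  have e3 : (2:ℝ)^a * (((j:ℝ)-1)/2^(k+d)) + c = (((J':ℤ):ℝ)-1)/2^(k'+d) := by
    rw [hc, hEq, hJr, pow_add, pow_add]; field_simp; ring
  have e4 : (2:ℝ)^a * ((j:ℝ)/2^(k+d)) + c = ((J':ℤ):ℝ)/2^(k'+d) := by
    rw [hc, hEq, hJr, pow_add, pow_add]; field_simp; ring
  rw [e3, e4]
  have hlt : (((J':ℤ):ℝ)-1)/2^(k'+d) < ((J':ℤ):ℝ)/2^(k'+d) := by
    have := two_pow_pos (k'+d)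
    rw [div_lt_div_iff₀ this this]; nlinarith
  have himM : Set.Icc ((((J':ℤ):ℝ)-1)/2^(k'+d)) (((J':ℤ):ℝ)/2^(k'+d)) ⊆ Set.Icc (0:ℝ) 1 := by
    rw [← e3, ← e4, ← affine_image_Icc hp hM.lt.le, ← hM.eqIcc]
    intro z hz
    apply hK'.subset_unit
    rw [← him]
    exact Set.image_mono hMK hz
  have h0 := (Set.Icc_subset_Icc_iff hlt.le).mp himM
  have hJ1 : 1 ≤ J' := by
    have h01 : (0:ℝ) ≤ ((J':ℤ):ℝ)-1 := by
      have := h0.1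
      rw [le_div_iff₀ (two_pow_pos _)] at this
      linarith
    have : (1:ℝ) ≤ ((J':ℤ):ℝ) := by linarith
    exact_mod_cast this
  have hJ2 : J' ≤ 2^(k'+d) := by
    have := h0.2
    rw [div_le_one (two_pow_pos _)] at this
    exact_mod_cast this
  refine isDyadic_iff.mpr ⟨k'+d, J'.toNat, by omega, ?_, ?_⟩
  · have hcast : ((2:ℕ)^(k'+d) : ℤ) = (2:ℤ)^(k'+d) := by push_cast; ring
    omega
  · have hcast : ((J'.toNat:ℕ):ℝ) = ((J':ℤ):ℝ) := by
      rw [← Int.cast_natCast, Int.toNat_of_nonneg (by omega : (0:ℤ) ≤ J')]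
    show _ = dIcc _ _
    unfold dIcc
    exact Icc_congr (by rw [hcast]) (by rw [hcast])


lemma prod_eq_prod {A B C D : Set ℝ} (hA : A.Nonempty) (hB : B.Nonempty)
    (h : A ×ˢ B = C ×ˢ D) : A = C ∧ B = D := by
  have hne : (C ×ˢ D).Nonempty := h ▸ hA.prod hB
  obtain ⟨hC, hD⟩ := Set.prod_nonempty_iff.mp hne
  constructor
  · rw [← Set.fst_image_prod A hB, h, Set.fst_image_prod C hD]
  · rw [← Set.snd_image_prod hA B, h, Set.snd_image_prod hC D]

lemma image_prod_of_affine {f : ℝ×ℝ → ℝ×ℝ} {I J : Set ℝ} {a b : ℤ} {c d : ℝ}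
    (hf : ∀ p ∈ I ×ˢ J, f p = ((2:ℝ)^a * p.1 + c, (2:ℝ)^b * p.2 + d)) :
    f '' (I ×ˢ J) = ((fun x => (2:ℝ)^a*x+c) '' I) ×ˢ ((fun y => (2:ℝ)^b*y+d) '' J) := by
  rw [Set.prod_image_image_eq]
  exact Set.image_congr hf

lemma part_cover {P : Finset (Set ℝ)} (hP : DyadicPartition P) {t : ℝ}
    (ht : t ∈ Set.Icc (0:ℝ) 1) : ∃ I ∈ P, t ∈ I := by
  rw [← hP.2.2] at ht
  rw [Set.mem_sUnion] at ht
  obtain ⟨I, hI, htI⟩ := ht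
  exact ⟨I, by exact_mod_cast hI, htI⟩

lemma part_subset_unit {P : Finset (Set ℝ)} (hP : DyadicPartition P) {I : Set ℝ}
    (hI : I ∈ P) : I ⊆ Set.Icc (0:ℝ) 1 := by
  obtain ⟨k, i, h⟩ := isDyadic_iff.mp (hP.1 I hI); exact h.subset_unit

lemma exists_sibling_pair {F : Finset (Set ℝ)} {kW jW : ℕ} {W : Set ℝ}
    (hdy : ∀ I ∈ F, IsDyadicInterval I)
    (hdisj : ∀ I ∈ F, ∀ J ∈ F, I ≠ J → interior I ∩ interior J = ∅)
    (hcov : ⋃₀ (F : Set (Set ℝ)) = W) (hW : Dy kW jW W)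
    (h2 : ∃ I ∈ F, ∃ I' ∈ F, I ≠ I') :
    ∃ I₁ ∈ F, ∃ I₂ ∈ F, I₁ ≠ I₂ ∧ IsDyadicInterval (I₁ ∪ I₂) := by
  obtain ⟨Ia, hIa, Ib, hIb, hab⟩ := h2
  have hFne : F.Nonempty := ⟨Ia, hIa⟩
  obtain ⟨I₁, hI₁F, hmax⟩ := F.exists_max_image lvl hFne
  obtain ⟨k, i, hI₁⟩ := isDyadic_iff.mp (hdy I₁ hI₁F)
  have hlvl1 : lvl I₁ = k := lvl_spec hI₁
  have hsubW : I₁ ⊆ W := hcov ▸ Set.subset_sUnion_of_mem (by exact_mod_cast hI₁F)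
  have hkW : kW ≤ k := hI₁.level_le_of_subset hW hsubW
  have hkWne : kW ≠ k := by
    intro he
    subst he
    have heq : I₁ = W := hI₁.eq_of_subset_level hW hsubW
    have hex : ∃ I' ∈ F, I' ≠ I₁ := by
      by_cases h : Ia = I₁
      · exact ⟨Ib, hIb, by rw [← h]; exact hab.symm⟩
      · exact ⟨Ia, hIa, h⟩
    obtain ⟨I', hI'F, hne⟩ := hex
    obtain ⟨l', j', hI'⟩ := isDyadic_iff.mp (hdy I' hI'F)
    have hsub' : I' ⊆ W := hcov ▸ Set.subset_sUnion_of_mem (by exact_mod_cast hI'F)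
    rw [← heq] at hsub'
    obtain ⟨x, hx⟩ := hI'.interior_nonempty
    have hmem : x ∈ interior I' ∩ interior I₁ := ⟨hx, interior_mono hsub' hx⟩
    rw [hdisj I' hI'F I₁ hI₁F hne] at hmem
    exact hmem
  obtain ⟨k₀, rfl⟩ : ∃ k₀, k = k₀ + 1 := ⟨k - 1, by omega⟩
  obtain ⟨i', p, S, W', hS, hi'ne, hW', hp1, hp2, hUn, hdisjIS⟩ := sibling hI₁
  have hW'W : W' ⊆ W := parent_subset hI₁ hW hsubW (by omega) (hp1 ▸ hW')
  have hSW : S ⊆ W := fun x hx => hW'W (hUn ▸ Set.mem_union_right _ hx)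
  obtain ⟨s, hsIoo, hsE⟩ := exists_generic (EP_finite hdy) hS.lt
  have hsS : s ∈ S := by rw [hS.eqIcc]; exact Set.Ioo_subset_Icc_self hsIoo
  have hsW : s ∈ W := hSW hsS
  obtain ⟨I₂, hI₂F, hsI₂⟩ : ∃ I ∈ F, s ∈ I := by
    rw [← hcov, Set.mem_sUnion] at hsW
    obtain ⟨I, hI, h⟩ := hsW
    exact ⟨I, by exact_mod_cast hI, h⟩
  obtain ⟨k₂, i₂, hI₂⟩ := isDyadic_iff.mp (hdy I₂ hI₂F)
  have hsint : s ∈ interior I₂ := mem_interior_of_not_EP hI₂F (hdy I₂ hI₂F) hsI₂ hsE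
  have hsintS : s ∈ interior S := by rw [hS.int_eq]; exact hsIoo
  have hk₂ : k₂ ≤ k₀ + 1 := by
    have := hmax I₂ hI₂F
    rw [hlvl1, lvl_spec hI₂] at this; exact this
  have hdone : S = I₂ → ∃ I₁ ∈ F, ∃ I₂ ∈ F, I₁ ≠ I₂ ∧ IsDyadicInterval (I₁ ∪ I₂) := by
    intro hSe
    refine ⟨I₁, hI₁F, I₂, hI₂F, ?_, ?_⟩
    · intro he
      obtain ⟨x, hx⟩ := hS.interior_nonempty
      have hmem : x ∈ interior I₁ ∩ interior S := ⟨by rw [he, ← hSe]; exact hx, hx⟩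
      rw [hdisjIS] at hmem; exact hmem
    · rw [← hSe, hUn]; exact ⟨k₀, p, hW'⟩
  rcases trichotomy ⟨_, _, hS⟩ ⟨_, _, hI₂⟩ with hsub | hsub | hd
  · by_cases hke : k₂ = k₀ + 1
    · subst hke; exact hdone (hS.eq_of_subset_level hI₂ hsub)
    · have hk₂' : k₂ ≤ k₀ := by omega
      have hW'I₂ : W' ⊆ I₂ := parent_subset hS hI₂ hsub hk₂' (hp2 ▸ hW')
      have hI₁I₂ : I₁ ⊆ I₂ := fun x hx => hW'I₂ (hUn ▸ Set.mem_union_left _ hx)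
      have hne12 : I₁ ≠ I₂ := by
        intro he
        obtain ⟨x, hx⟩ := hS.interior_nonempty
        have hmem : x ∈ interior I₁ ∩ interior S :=
          ⟨by rw [he]; exact interior_mono hsub hx, hx⟩
        rw [hdisjIS] at hmem; exact hmem
      exfalso
      obtain ⟨x, hx⟩ := hI₁.interior_nonempty
      have hmem : x ∈ interior I₁ ∩ interior I₂ := ⟨hx, interior_mono hI₁I₂ hx⟩
      rw [hdisj I₁ hI₁F I₂ hI₂F hne12] at hmem; exact hmem
  · have hge : k₀ + 1 ≤ k₂ := hI₂.level_le_of_subset hS hsub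
    have hke : k₂ = k₀ + 1 := by omega
    subst hke
    exact hdone (hI₂.eq_of_subset_level hS hsub).symm
  · exfalso
    have hmem : s ∈ interior S ∩ interior I₂ := ⟨hsintS, hsint⟩
    rw [hd] at hmem; exact hmem

lemma rect_decomp {R : Set (ℝ×ℝ)} (h : IsDyadicRect R) :
    IsDyadicInterval (Prod.fst '' R) ∧ IsDyadicInterval (Prod.snd '' R) ∧
      R = (Prod.fst '' R) ×ˢ (Prod.snd '' R) := by
  obtain ⟨I, J, hI, hJ, rfl⟩ := h
  obtain ⟨k, i, hI'⟩ := isDyadic_iff.mp hI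
  obtain ⟨l, j, hJ'⟩ := isDyadic_iff.mp hJ
  rw [Set.fst_image_prod _ hJ'.nonempty, Set.snd_image_prod hI'.nonempty]
  exact ⟨hI, hJ, rfl⟩

lemma constr {Part : Finset (Set (ℝ × ℝ))}
    (hrect : ∀ R ∈ Part, IsDyadicRect R)
    (hdisj : ∀ R ∈ Part, ∀ R' ∈ Part, R ≠ R' → interior R ∩ interior R' = ∅)
    (hcover : ⋃₀ (Part : Set (Set (ℝ × ℝ))) = Set.Icc (0:ℝ) 1 ×ˢ Set.Icc (0:ℝ) 1) :
    ∃ P₀ : Finset (Set ℝ), DyadicPartition P₀ ∧ P₀.card ≤ Part.card ∧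
      (∀ I ∈ P₀, ∃ R ∈ Part, Prod.fst '' R = I) ∧
      (∀ I ∈ P₀, ∀ R ∈ Part, Prod.fst '' R ⊆ I → Prod.fst '' R = I) := by
  classical
  set PX := Part.image (fun R => Prod.fst '' R) with hPXdef
  set PY := Part.image (fun R => Prod.snd '' R) with hPYdef
  have hPXdy : ∀ I ∈ PX, IsDyadicInterval I := by
    intro I hI
    obtain ⟨R, hR, rfl⟩ := Finset.mem_image.mp hI
    exact (rect_decomp (hrect R hR)).1
  have hPYdy : ∀ J ∈ PY, IsDyadicInterval J := by
    intro J hJ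
    obtain ⟨R, hR, rfl⟩ := Finset.mem_image.mp hJ
    exact (rect_decomp (hrect R hR)).2.1
  set P₀ := PX.filter (fun I => ∀ I' ∈ PX, I' ⊆ I → I' = I) with hP₀def
  have hP₀PX : ∀ I ∈ P₀, I ∈ PX := fun I hI => (Finset.mem_filter.mp hI).1
  have hP₀min : ∀ I ∈ P₀, ∀ I' ∈ PX, I' ⊆ I → I' = I :=
    fun I hI => (Finset.mem_filter.mp hI).2
  have hP₀dy : ∀ I ∈ P₀, IsDyadicInterval I := fun I hI => hPXdy I (hP₀PX I hI)
  have hpt : ∀ t u : ℝ, t ∈ Set.Icc (0:ℝ) 1 → u ∈ Set.Icc (0:ℝ) 1 →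
      ∃ R ∈ Part, (t,u) ∈ R := by
    intro t u ht hu
    have hm : (t,u) ∈ Set.Icc (0:ℝ) 1 ×ˢ Set.Icc (0:ℝ) 1 := ⟨ht, hu⟩
    rw [← hcover, Set.mem_sUnion] at hm
    obtain ⟨R, hR, h⟩ := hm
    exact ⟨R, by exact_mod_cast hR, h⟩
  have key1 : ∀ t, t ∈ Set.Icc (0:ℝ) 1 → t ∉ EP PX → ∃ I ∈ P₀, t ∈ I := by
    intro t ht htE
    set T := PX.filter (fun I => t ∈ I) with hTdef
    have hTne : T.Nonempty := by
      obtain ⟨R, hR, hmem⟩ := hpt t 0 ht (by norm_num)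
      exact ⟨Prod.fst '' R, Finset.mem_filter.mpr
        ⟨Finset.mem_image_of_mem _ hR, ⟨(t,0), hmem, rfl⟩⟩⟩
    obtain ⟨I, hIT, hmaxI⟩ := T.exists_max_image lvl hTne
    have hIPX : I ∈ PX := (Finset.mem_filter.mp hIT).1
    have htI : t ∈ I := (Finset.mem_filter.mp hIT).2
    obtain ⟨k, i, hId⟩ := isDyadic_iff.mp (hPXdy I hIPX)
    refine ⟨I, Finset.mem_filter.mpr ⟨hIPX, ?_⟩, htI⟩
    intro I' hI'PX hsub
    obtain ⟨k', i', hI'd⟩ := isDyadic_iff.mp (hPXdy I' hI'PX)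
    by_cases htI' : t ∈ I'
    · have hI'T : I' ∈ T := Finset.mem_filter.mpr ⟨hI'PX, htI'⟩
      have h1 : lvl I' ≤ lvl I := hmaxI I' hI'T
      rw [lvl_spec hId, lvl_spec hI'd] at h1
      have h2 : k ≤ k' := hI'd.level_le_of_subset hId hsub
      have hke : k' = k := le_antisymm h1 h2
      exact (hke ▸ hI'd).eq_of_subset_level hId hsub
    · exfalso
      obtain ⟨R', hR', hI'eq⟩ := Finset.mem_image.mp hI'PX
      obtain ⟨hRx, hRy, hRprod⟩ := rect_decomp (hrect R' hR')
      obtain ⟨lJ, jJ, hJ'd⟩ := isDyadic_iff.mp hRy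
      obtain ⟨u, huIoo, huE⟩ := exists_generic (EP_finite hPYdy) hJ'd.lt
      have huJ : u ∈ Prod.snd '' R' := by
        rw [hJ'd.eqIcc]; exact Set.Ioo_subset_Icc_self huIoo
      have huint : u ∈ interior (Prod.snd '' R') := by rw [hJ'd.int_eq]; exact huIoo
      have huU : u ∈ Set.Icc (0:ℝ) 1 := hJ'd.subset_unit huJ
      obtain ⟨R₂, hR₂, hmem₂⟩ := hpt t u ht huU
      obtain ⟨hR₂x, hR₂y, hR₂prod⟩ := rect_decomp (hrect R₂ hR₂)
      have htI₂ : t ∈ Prod.fst '' R₂ := ⟨(t,u), hmem₂, rfl⟩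
      have huJ₂ : u ∈ Prod.snd '' R₂ := ⟨(t,u), hmem₂, rfl⟩
      have hI₂PX : Prod.fst '' R₂ ∈ PX := Finset.mem_image_of_mem _ hR₂
      have hI₂T : Prod.fst '' R₂ ∈ T := Finset.mem_filter.mpr ⟨hI₂PX, htI₂⟩
      have htintI₂ : t ∈ interior (Prod.fst '' R₂) :=
        mem_interior_of_not_EP hI₂PX hR₂x htI₂ htE
      have htintI : t ∈ interior I := mem_interior_of_not_EP hIPX (hPXdy I hIPX) htI htE
      have huintJ₂ : u ∈ interior (Prod.snd '' R₂) :=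
        mem_interior_of_not_EP (Finset.mem_image_of_mem _ hR₂) hR₂y huJ₂ huE
      have hII₂ : I ⊆ Prod.fst '' R₂ := by
        obtain ⟨k₂, i₂, hI₂d⟩ := isDyadic_iff.mp hR₂x
        rcases trichotomy ⟨_,_,hId⟩ ⟨_,_,hI₂d⟩ with hs | hs | hd
        · exact hs
        · have h1 : lvl (Prod.fst '' R₂) ≤ lvl I := hmaxI _ hI₂T
          rw [lvl_spec hId, lvl_spec hI₂d] at h1
          have h2 : k ≤ k₂ := hI₂d.level_le_of_subset hId hs
          have hke : k₂ = k := le_antisymm h1 h2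
          have hI₂d' : Dy k i₂ (Prod.fst '' R₂) := hke ▸ hI₂d
          rw [hI₂d'.eq_of_subset_level hId hs]
        · exfalso
          have hmm : t ∈ interior I ∩ interior (Prod.fst '' R₂) := ⟨htintI, htintI₂⟩
          rw [hd] at hmm; exact hmm
      have hRne : R₂ ≠ R' := by
        intro he; apply htI'; rw [← hI'eq, ← he]; exact htI₂
      obtain ⟨w, hw⟩ : (interior I').Nonempty := hI'd.interior_nonempty
      have hwI₂ : w ∈ interior (Prod.fst '' R₂) :=
        interior_mono (Set.Subset.trans hsub hII₂) hw
      have hmm : (w, u) ∈ interior R₂ ∩ interior R' := by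
        constructor
        · rw [hR₂prod, interior_prod_eq]; exact ⟨hwI₂, huintJ₂⟩
        · rw [hRprod, interior_prod_eq]
          refine ⟨?_, huint⟩
          rw [hI'eq]; exact hw
      rw [hdisj R₂ hR₂ R' hR' hRne] at hmm; exact hmm
  have hP₀disj : ∀ I ∈ P₀, ∀ J ∈ P₀, I ≠ J → interior I ∩ interior J = ∅ := by
    intro I hI J hJ hne
    rcases trichotomy (hP₀dy I hI) (hP₀dy J hJ) with hs | hs | hd
    · exact absurd (hP₀min J hJ I (hP₀PX I hI) hs) hne
    · exact absurd (hP₀min I hI J (hP₀PX J hJ) hs) (fun h => hne h.symm)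
    · exact hd
  have hclosed : IsClosed (⋃₀ (P₀ : Set (Set ℝ))) := by
    rw [Set.sUnion_eq_biUnion]
    exact Set.Finite.isClosed_biUnion P₀.finite_toSet (fun I hI => by
      obtain ⟨k,i,h⟩ := isDyadic_iff.mp (hP₀dy I (by exact_mod_cast hI))
      exact h.isClosed)
  have hUsub : ⋃₀ (P₀ : Set (Set ℝ)) ⊆ Set.Icc 0 1 := by
    apply Set.sUnion_subset; intro I hI
    obtain ⟨k,i,h⟩ := isDyadic_iff.mp (hP₀dy I (by exact_mod_cast hI))
    exact h.subset_unit
  have hUsup : Set.Icc (0:ℝ) 1 ⊆ ⋃₀ (P₀ : Set (Set ℝ)) := by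
    intro t ht
    have h1 : t ∈ closure (Set.Ioo (0:ℝ) 1 \ EP PX) :=
      Icc_subset_closure (EP_finite hPXdy) (by norm_num) ht
    have h2 : Set.Ioo (0:ℝ) 1 \ EP PX ⊆ ⋃₀ (P₀ : Set (Set ℝ)) := by
      rintro s ⟨hs, hsE⟩
      obtain ⟨I, hI, hsI⟩ := key1 s (Set.Ioo_subset_Icc_self hs) hsE
      exact Set.mem_sUnion.mpr ⟨I, by exact_mod_cast hI, hsI⟩
    have h3 := closure_mono h2 h1
    rwa [hclosed.closure_eq] at h3
  refine ⟨P₀, ⟨hP₀dy, hP₀disj, subset_antisymm hUsub hUsup⟩, ?_, ?_, ?_⟩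
  · calc P₀.card ≤ PX.card := Finset.card_filter_le _ _
      _ ≤ Part.card := Finset.card_image_le
  · intro I hI
    obtain ⟨R, hR, he⟩ := Finset.mem_image.mp (hP₀PX I hI)
    exact ⟨R, hR, he⟩
  · intro I hI R hR hs
    exact hP₀min I hI _ (Finset.mem_image_of_mem _ hR) hs

lemma sUnion_closed {F : Finset (Set ℝ)} (h : ∀ I ∈ F, IsDyadicInterval I) :
    IsClosed (⋃₀ (F : Set (Set ℝ))) := by
  rw [Set.sUnion_eq_biUnion]
  exact Set.Finite.isClosed_biUnion F.finite_toSet (fun I hI => by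
    obtain ⟨k,i,hd⟩ := isDyadic_iff.mp (h I (by exact_mod_cast hI)); exact hd.isClosed)

def swapMap (f : ℝ×ℝ → ℝ×ℝ) : ℝ×ℝ → ℝ×ℝ := fun p => (f p.swap).swap

lemma swapMap_swapMap (f : ℝ×ℝ → ℝ×ℝ) : swapMap (swapMap f) = f := by
  funext p; simp [swapMap]

lemma isDyadicRect_swap {R : Set (ℝ×ℝ)} (h : IsDyadicRect R) :
    IsDyadicRect (Prod.swap '' R) := by
  obtain ⟨I, J, hI, hJ, rfl⟩ := h
  exact ⟨J, I, hJ, hI, by rw [Set.image_swap_prod]⟩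

lemma interior_swap (R : Set (ℝ×ℝ)) :
    interior (Prod.swap '' R) = Prod.swap '' interior R := by
  have h := (Homeomorph.prodComm ℝ ℝ).image_interior R
  simpa using h.symm

lemma dyadicAffineOn_swap {f : ℝ×ℝ→ℝ×ℝ} {I J : Set ℝ} (h : DyadicAffineOn f (I ×ˢ J)) :
    DyadicAffineOn (swapMap f) (J ×ˢ I) := by
  obtain ⟨a, b, c, d, hf⟩ := h
  refine ⟨b, a, d, c, fun p hp => ?_⟩
  have hmem : p.swap ∈ I ×ˢ J := ⟨hp.2, hp.1⟩
  have := hf p.swap hmem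
  simp only [swapMap, this, Prod.swap_prod_mk]
  rfl

lemma image_swapMap (f : ℝ×ℝ→ℝ×ℝ) (I J : Set ℝ) :
    swapMap f '' (J ×ˢ I) = Prod.swap '' (f '' (I ×ˢ J)) := by
  rw [← Set.image_swap_prod, Set.image_image, Set.image_image]
  rfl

lemma gridRep_swap {f : ℝ×ℝ→ℝ×ℝ} {P Q : Finset (Set ℝ)} (h : GridRep f P Q) :
    GridRep (swapMap f) Q P := by
  obtain ⟨hP, hQ, hg⟩ := h
  refine ⟨hQ, hP, fun J hJ I hI => ?_⟩
  obtain ⟨haff, hrect⟩ := hg I hI J hJ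
  refine ⟨dyadicAffineOn_swap haff, ?_⟩
  rw [image_swapMap]
  exact isDyadicRect_swap hrect

lemma merge_gridRep {f : ℝ×ℝ→ℝ×ℝ} {P Q P₀ Q₀ : Finset (Set ℝ)} {I₁ I₂ I₀ : Set ℝ}
    (hGR : GridRep f P Q) (hGR₀ : GridRep f P₀ Q₀) (hI₀ : I₀ ∈ P₀)
    (h1 : I₁ ∈ P) (h2 : I₂ ∈ P) (hne : I₁ ≠ I₂) (hU : IsDyadicInterval (I₁ ∪ I₂))
    (hs1 : I₁ ⊆ I₀) (hs2 : I₂ ⊆ I₀) :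
    VertReducible f P Q := by
  classical
  refine ⟨I₁, h1, I₂, h2, hne, hU, ?_⟩
  obtain ⟨hP, hQ, hg⟩ := hGR
  obtain ⟨hP₀, hQ₀, hg₀⟩ := hGR₀
  have hSP : ∀ I ∈ (P.erase I₁).erase I₂, I ∈ P :=
    fun I hI => Finset.mem_of_mem_erase (Finset.mem_of_mem_erase hI)
  have hSne1 : ∀ I ∈ (P.erase I₁).erase I₂, I ≠ I₁ :=
    fun I hI => Finset.ne_of_mem_erase (Finset.mem_of_mem_erase hI)
  have hSne2 : ∀ I ∈ (P.erase I₁).erase I₂, I ≠ I₂ :=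
    fun I hI => Finset.ne_of_mem_erase hI
  obtain ⟨kU, iU, hUd⟩ := isDyadic_iff.mp hU
  obtain ⟨k₀, i₀, hI₀d⟩ := isDyadic_iff.mp (hP₀.1 I₀ hI₀)
  obtain ⟨k₁, i₁, hI₁d⟩ := isDyadic_iff.mp (hP.1 I₁ h1)
  have hs12 : I₁ ∪ I₂ ⊆ I₀ := Set.union_subset hs1 hs2
  have hUdisj : ∀ J ∈ (P.erase I₁).erase I₂,
      interior (I₁ ∪ I₂) ∩ interior J = ∅ := by
    intro J hJ
    apply Set.eq_empty_iff_forall_notMem.mpr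
    rintro x ⟨hxU, hxJ⟩
    have hxU' : x ∈ I₁ ∪ I₂ := interior_subset hxU
    rcases hxU' with hx | hx
    · exact not_mem_interior_of_disjoint (hP.1 I₁ h1) (hP.1 J (hSP J hJ))
        (hP.2.1 I₁ h1 J (hSP J hJ) (Ne.symm (hSne1 J hJ))) hx hxJ
    · exact not_mem_interior_of_disjoint (hP.1 I₂ h2) (hP.1 J (hSP J hJ))
        (hP.2.1 I₂ h2 J (hSP J hJ) (Ne.symm (hSne2 J hJ))) hx hxJ
  refine ⟨⟨?_, ?_, ?_⟩, hQ, ?_⟩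
  · -- dyadic
    intro I hI
    rcases Finset.mem_insert.mp hI with rfl | hI
    · exact hU
    · exact hP.1 I (hSP I hI)
  · -- interiors disjoint
    intro I hI J hJ hne'
    rcases Finset.mem_insert.mp hI with rfl | hI'
    · rcases Finset.mem_insert.mp hJ with he | hJ'
      · exact absurd he.symm hne'
      · exact hUdisj J hJ'
    · rcases Finset.mem_insert.mp hJ with rfl | hJ'
      · rw [Set.inter_comm]; exact hUdisj I hI'
      · exact hP.2.1 I (hSP I hI') J (hSP J hJ') hne'
  · -- cover
    rw [Finset.coe_insert, Set.sUnion_insert]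
    apply subset_antisymm
    · apply Set.union_subset
      · exact hUd.subset_unit
      · exact Set.sUnion_subset
          (fun I hI => part_subset_unit hP (hSP I (by exact_mod_cast hI)))
    · intro x hx
      rw [← hP.2.2, Set.mem_sUnion] at hx
      obtain ⟨I, hIP, hxI⟩ := hx
      have hIP' : I ∈ P := by exact_mod_cast hIP
      by_cases he1 : I = I₁
      · exact Set.mem_union_left _ (Set.mem_union_left _ (he1 ▸ hxI))
      by_cases he2 : I = I₂
      · exact Set.mem_union_left _ (Set.mem_union_right _ (he2 ▸ hxI))
      · exact Set.mem_union_right _ (Set.mem_sUnion.mpr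
          ⟨I, by exact_mod_cast Finset.mem_erase.mpr ⟨he2, Finset.mem_erase.mpr ⟨he1, hIP'⟩⟩, hxI⟩)
  · -- grid condition
    intro I hI J hJ
    rcases Finset.mem_insert.mp hI with rfl | hI'
    swap
    · exact hg I (hSP I hI') J hJ
    obtain ⟨a₁,b₁,c₁,d₁,hf₁⟩ := (hg I₁ h1 J hJ).1
    obtain ⟨a₂,b₂,c₂,d₂,hf₂⟩ := (hg I₂ h2 J hJ).1
    obtain ⟨kJ, jJ, hJd⟩ := isDyadic_iff.mp (hQ.1 J hJ)
    have hJunit : J ⊆ Set.Icc (0:ℝ) 1 := hJd.subset_unit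
    have hfU : ∀ p ∈ (I₁ ∪ I₂) ×ˢ J,
        f p = ((2:ℝ)^a₁ * p.1 + c₁, (2:ℝ)^b₁ * p.2 + d₁) := by
      rintro ⟨x, y⟩ ⟨hx, hy⟩
      rcases hx with hx | hx
      · exact hf₁ (x,y) ⟨hx, hy⟩
      · obtain ⟨J₀, hJ₀, hyJ₀⟩ := part_cover hQ₀ (hJunit hy)
        obtain ⟨A,B,C,D,hf₀⟩ := (hg₀ I₀ hI₀ J₀ hJ₀).1
        have e₁ : ∀ x' ∈ Set.Icc (((i₁:ℝ)-1)/2^k₁) ((i₁:ℝ)/2^k₁),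
            (2:ℝ)^a₁ * x' + c₁ = 2^A * x' + C := by
          intro x' hx'
          have hx'I₁ : x' ∈ I₁ := by rw [hI₁d.eqIcc]; exact hx'
          have t1 := hf₁ (x', y) ⟨hx'I₁, hy⟩
          have t2 := hf₀ (x', y) ⟨hs1 hx'I₁, hyJ₀⟩
          exact congrArg Prod.fst (t1.symm.trans t2)
        obtain ⟨hAa, hCc⟩ := affine_coeff_eq hI₁d.lt e₁
        have t0 := hf₀ (x,y) ⟨hs2 hx, hyJ₀⟩
        have hx₁ : ((i₁:ℝ)-1)/2^k₁ ∈ I₁ := by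
          rw [hI₁d.eqIcc]; exact Set.left_mem_Icc.mpr hI₁d.lt.le
        have t1' := hf₁ (((i₁:ℝ)-1)/2^k₁, y) ⟨hx₁, hy⟩
        have t0' := hf₀ (((i₁:ℝ)-1)/2^k₁, y) ⟨hs1 hx₁, hyJ₀⟩
        have hsnd : (2:ℝ)^B * y + D = (2:ℝ)^b₁ * y + d₁ :=
          (congrArg Prod.snd (t0'.symm.trans t1'))
        rw [t0, ← hAa, ← hCc, hsnd]
    refine ⟨⟨a₁, b₁, c₁, d₁, hfU⟩, ?_⟩
    rw [image_prod_of_affine hfU]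
    have him₁ := (hg I₁ h1 J hJ).2
    rw [image_prod_of_affine hf₁] at him₁
    obtain ⟨I₁', J₁', hI₁', hJ₁', heq₁⟩ := him₁
    obtain ⟨hgI₁eq, hhJeq⟩ := prod_eq_prod ((hI₁d.nonempty).image _)
      ((hJd.nonempty).image _) heq₁
    -- the horizontal image is dyadic
    have hhJ : IsDyadicInterval ((fun y => (2:ℝ)^b₁*y+d₁) '' J) := by
      rw [hhJeq]; exact hJ₁'
    -- the vertical image of the union, via the coarse rectangle
    have hyu : ((jJ:ℝ)-1)/2^kJ ∈ J := by
      rw [hJd.eqIcc]; exact Set.left_mem_Icc.mpr hJd.lt.le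
    obtain ⟨J₀, hJ₀, hyJ₀⟩ := part_cover hQ₀ (hJunit hyu)
    obtain ⟨A,B,C,D,hf₀⟩ := (hg₀ I₀ hI₀ J₀ hJ₀).1
    have e₁ : ∀ x' ∈ Set.Icc (((i₁:ℝ)-1)/2^k₁) ((i₁:ℝ)/2^k₁),
        (2:ℝ)^a₁ * x' + c₁ = 2^A * x' + C := by
      intro x' hx'
      have hx'I₁ : x' ∈ I₁ := by rw [hI₁d.eqIcc]; exact hx'
      have t1 := hf₁ (x', ((jJ:ℝ)-1)/2^kJ) ⟨hx'I₁, hyu⟩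
      have t2 := hf₀ (x', ((jJ:ℝ)-1)/2^kJ) ⟨hs1 hx'I₁, hyJ₀⟩
      exact congrArg Prod.fst (t1.symm.trans t2)
    obtain ⟨hAa, hCc⟩ := affine_coeff_eq hI₁d.lt e₁
    have him₀ := (hg₀ I₀ hI₀ J₀ hJ₀).2
    rw [image_prod_of_affine hf₀] at him₀
    obtain ⟨I₀', J₀', hI₀', hJ₀', heq₀⟩ := him₀
    obtain ⟨kq, iq, hI₀'d⟩ := isDyadic_iff.mp hI₀'
    obtain ⟨kq2, jq2, hJ₀d⟩ := isDyadic_iff.mp (hQ₀.1 J₀ hJ₀)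
    obtain ⟨hgI₀eq, _⟩ := prod_eq_prod ((hI₀d.nonempty).image _)
      ((hJ₀d.nonempty).image _) heq₀
    have hgU : IsDyadicInterval ((fun x => (2:ℝ)^A*x+C) '' (I₁ ∪ I₂)) :=
      affine_sub_dyadic hI₀d hI₀'d hUd hs12 hgI₀eq
    refine ⟨_, _, ?_, hhJ, rfl⟩
    rw [hAa, hCc]; exact hgU

lemma main {f : ℝ×ℝ→ℝ×ℝ} {N : ℕ} {Part : Finset (Set (ℝ × ℝ))}
    (hcard : Part.card = N)
    (hrect : ∀ R ∈ Part, IsDyadicRect R)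
    (hdisj : ∀ R ∈ Part, ∀ R' ∈ Part, R ≠ R' → interior R ∩ interior R' = ∅)
    (hcover : ⋃₀ (Part : Set (Set (ℝ × ℝ))) = Set.Icc (0 : ℝ) 1 ×ˢ Set.Icc (0 : ℝ) 1)
    (haff : ∀ R ∈ Part, DyadicAffineOn f R ∧ IsDyadicRect (f '' R)) :
    ∃ P₀ Q₀ : Finset (Set ℝ), GridRep f P₀ Q₀ ∧ P₀.card ≤ N ∧ Q₀.card ≤ N ∧
      ∀ P Q : Finset (Set ℝ), GridRep f P Q → ¬ VertReducible f P Q → P.card ≤ N := by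
  classical
  obtain ⟨P₀, hP₀part, hP₀card, hP₀mem, hP₀min⟩ := constr hrect hdisj hcover
  set Part' := Part.image (fun R => Prod.swap '' R) with hPart'def
  have hrect' : ∀ R ∈ Part', IsDyadicRect R := by
    intro R hR; obtain ⟨R₀, hR₀, rfl⟩ := Finset.mem_image.mp hR
    exact isDyadicRect_swap (hrect R₀ hR₀)
  have hdisj' : ∀ R ∈ Part', ∀ R' ∈ Part', R ≠ R' → interior R ∩ interior R' = ∅ := by
    intro R hR R' hR' hne
    obtain ⟨R₀, hR₀, rfl⟩ := Finset.mem_image.mp hR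
    obtain ⟨R₀', hR₀', rfl⟩ := Finset.mem_image.mp hR'
    have hne₀ : R₀ ≠ R₀' := fun h => hne (by rw [h])
    rw [interior_swap, interior_swap, ← Set.image_inter Prod.swap_injective,
      hdisj R₀ hR₀ R₀' hR₀' hne₀, Set.image_empty]
  have hcover' : ⋃₀ (Part' : Set (Set (ℝ×ℝ))) = Set.Icc (0:ℝ) 1 ×ˢ Set.Icc (0:ℝ) 1 := by
    have h1 : ⋃₀ (Part' : Set (Set (ℝ×ℝ))) = Prod.swap '' ⋃₀ (Part : Set (Set (ℝ×ℝ))) := by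
      apply subset_antisymm
      · apply Set.sUnion_subset
        intro R hR
        obtain ⟨R₀, hR₀, rfl⟩ := Finset.mem_image.mp (by exact_mod_cast hR : R ∈ Part')
        exact Set.image_mono (Set.subset_sUnion_of_mem (by exact_mod_cast hR₀))
      · rintro p ⟨q, hq, rfl⟩
        rw [Set.mem_sUnion] at hq
        obtain ⟨R₀, hR₀, hqR⟩ := hq
        exact Set.mem_sUnion.mpr ⟨Prod.swap '' R₀,
          by exact_mod_cast Finset.mem_image_of_mem _ (by exact_mod_cast hR₀ : R₀ ∈ Part),
          Set.mem_image_of_mem _ hqR⟩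
    rw [h1, hcover, Set.image_swap_prod]
  obtain ⟨Q₀, hQ₀part, hQ₀card, hQ₀mem, hQ₀min'⟩ := constr hrect' hdisj' hcover'
  have hsndfst : ∀ R : Set (ℝ×ℝ), Prod.fst '' (Prod.swap '' R) = Prod.snd '' R := by
    intro R; rw [Set.image_image]; rfl
  have hQ₀minY : ∀ J ∈ Q₀, ∀ R ∈ Part, Prod.snd '' R ⊆ J → Prod.snd '' R = J := by
    intro J hJ R hR hs
    have h := hQ₀min' J hJ (Prod.swap '' R) (Finset.mem_image_of_mem _ hR)
      (by rw [hsndfst]; exact hs)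
    rwa [hsndfst] at h
  have hQ₀cardN : Q₀.card ≤ N := by
    calc Q₀.card ≤ Part'.card := hQ₀card
      _ ≤ Part.card := Finset.card_image_le
      _ = N := hcard
  -- projections are dyadic
  have hPXdy : ∀ I' ∈ Part.image (fun R => Prod.fst '' R), IsDyadicInterval I' := by
    intro I' hI'
    obtain ⟨R, hR, rfl⟩ := Finset.mem_image.mp hI'
    exact (rect_decomp (hrect R hR)).1
  have hPYdy : ∀ J' ∈ Part.image (fun R => Prod.snd '' R), IsDyadicInterval J' := by
    intro J' hJ'
    obtain ⟨R, hR, rfl⟩ := Finset.mem_image.mp hJ'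
    exact (rect_decomp (hrect R hR)).2.1
  have key2 : ∀ I ∈ P₀, ∀ J ∈ Q₀, ∃ R ∈ Part, I ⊆ Prod.fst '' R ∧ J ⊆ Prod.snd '' R := by
    intro I hI J hJ
    obtain ⟨kI, iI, hId⟩ := isDyadic_iff.mp (hP₀part.1 I hI)
    obtain ⟨kJ, jJ, hJd⟩ := isDyadic_iff.mp (hQ₀part.1 J hJ)
    obtain ⟨s, hsIoo, hsE⟩ := exists_generic (EP_finite hPXdy) hId.lt
    obtain ⟨u, huIoo, huE⟩ := exists_generic (EP_finite hPYdy) hJd.lt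
    have hsI : s ∈ I := by rw [hId.eqIcc]; exact Set.Ioo_subset_Icc_self hsIoo
    have huJ : u ∈ J := by rw [hJd.eqIcc]; exact Set.Ioo_subset_Icc_self huIoo
    have hsintI : s ∈ interior I := by rw [hId.int_eq]; exact hsIoo
    have huintJ : u ∈ interior J := by rw [hJd.int_eq]; exact huIoo
    have hmem : (s,u) ∈ ⋃₀ (Part : Set (Set (ℝ×ℝ))) := by
      rw [hcover]; exact ⟨hId.subset_unit hsI, hJd.subset_unit huJ⟩
    rw [Set.mem_sUnion] at hmem
    obtain ⟨R, hRc, hmemR⟩ := hmem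
    have hR : R ∈ Part := by exact_mod_cast hRc
    obtain ⟨hRx, hRy, hRprod⟩ := rect_decomp (hrect R hR)
    have hsRx : s ∈ Prod.fst '' R := ⟨(s,u), hmemR, rfl⟩
    have huRy : u ∈ Prod.snd '' R := ⟨(s,u), hmemR, rfl⟩
    have hsint : s ∈ interior (Prod.fst '' R) :=
      mem_interior_of_not_EP (Finset.mem_image_of_mem _ hR) hRx hsRx hsE
    have huint : u ∈ interior (Prod.snd '' R) :=
      mem_interior_of_not_EP (Finset.mem_image_of_mem _ hR) hRy huRy huE
    refine ⟨R, hR, ?_, ?_⟩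
    · rcases trichotomy (hP₀part.1 I hI) hRx with hsb | hsb | hd
      · exact hsb
      · rw [hP₀min I hI R hR hsb]
      · exfalso
        have hmm : s ∈ interior I ∩ interior (Prod.fst '' R) := ⟨hsintI, hsint⟩
        rw [hd] at hmm; exact hmm
    · rcases trichotomy (hQ₀part.1 J hJ) hRy with hsb | hsb | hd
      · exact hsb
      · rw [hQ₀minY J hJ R hR hsb]
      · exfalso
        have hmm : u ∈ interior J ∩ interior (Prod.snd '' R) := ⟨huintJ, huint⟩
        rw [hd] at hmm; exact hmm
  have hGR₀ : GridRep f P₀ Q₀ := by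
    refine ⟨hP₀part, hQ₀part, fun I hI J hJ => ?_⟩
    obtain ⟨R, hR, hIs, hJs⟩ := key2 I hI J hJ
    obtain ⟨hRx, hRy, hRprod⟩ := rect_decomp (hrect R hR)
    obtain ⟨a, b, c, d, hfR⟩ := (haff R hR).1
    have hsubR : I ×ˢ J ⊆ R := by rw [hRprod]; exact Set.prod_mono hIs hJs
    have hfIJ : ∀ p ∈ I ×ˢ J, f p = ((2:ℝ)^a * p.1 + c, (2:ℝ)^b * p.2 + d) :=
      fun p hp => hfR p (hsubR hp)
    refine ⟨⟨a,b,c,d,hfIJ⟩, ?_⟩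
    rw [image_prod_of_affine hfIJ]
    have himR := (haff R hR).2
    have hfR' : ∀ p ∈ (Prod.fst '' R) ×ˢ (Prod.snd '' R),
        f p = ((2:ℝ)^a * p.1 + c, (2:ℝ)^b * p.2 + d) :=
      fun p hp => hfR p (by rw [hRprod]; exact hp)
    rw [show R = (Prod.fst '' R) ×ˢ (Prod.snd '' R) from hRprod,
      image_prod_of_affine hfR'] at himR
    obtain ⟨I', J', hI', hJ', heqR⟩ := himR
    obtain ⟨kx, ix, hRxd⟩ := isDyadic_iff.mp hRx
    obtain ⟨ky, iy, hRyd⟩ := isDyadic_iff.mp hRy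
    obtain ⟨kI, iI, hId⟩ := isDyadic_iff.mp (hP₀part.1 I hI)
    obtain ⟨kJ, jJ, hJd⟩ := isDyadic_iff.mp (hQ₀part.1 J hJ)
    obtain ⟨kI', iI', hI'd⟩ := isDyadic_iff.mp hI'
    obtain ⟨kJ', jJ', hJ'd⟩ := isDyadic_iff.mp hJ'
    obtain ⟨hgeq, hheq⟩ := prod_eq_prod ((hRxd.nonempty).image _)
      ((hRyd.nonempty).image _) heqR
    exact ⟨_, _, affine_sub_dyadic hRxd hI'd hId hIs hgeq,
      affine_sub_dyadic hRyd hJ'd hJd hJs hheq, rfl⟩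
  refine ⟨P₀, Q₀, hGR₀, hcard ▸ hP₀card, hQ₀cardN, ?_⟩
  intro P Q hGR hnv
  have claim : ∀ I₀ ∈ P₀, ∀ I ∈ P, (interior I₀ ∩ interior I).Nonempty → I₀ ⊆ I := by
    intro I₀ hI₀ I hIP hnemp
    obtain ⟨kI, iI, hId⟩ := isDyadic_iff.mp (hGR.1.1 I hIP)
    obtain ⟨k₀, i₀, hI₀d⟩ := isDyadic_iff.mp (hP₀part.1 I₀ hI₀)
    rcases trichotomy ⟨_,_,hI₀d⟩ ⟨_,_,hId⟩ with hsb | hsb | hd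
    · exact hsb
    · by_cases heq : I = I₀
      · subst heq; exact subset_rfl
      · exfalso
        apply hnv
        have hFP : ∀ I' ∈ P.filter (fun I' => I' ⊆ I₀), I' ∈ P :=
          fun I' h => (Finset.mem_filter.mp h).1
        have hFsub : ∀ I' ∈ P.filter (fun I' => I' ⊆ I₀), I' ⊆ I₀ :=
          fun I' h => (Finset.mem_filter.mp h).2
        have hFdy : ∀ I' ∈ P.filter (fun I' => I' ⊆ I₀), IsDyadicInterval I' :=
          fun I' h => hGR.1.1 I' (hFP I' h)
        have hFdisj : ∀ I' ∈ P.filter (fun I' => I' ⊆ I₀),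
            ∀ J' ∈ P.filter (fun I' => I' ⊆ I₀), I' ≠ J' →
              interior I' ∩ interior J' = ∅ :=
          fun I' h J' h' => hGR.1.2.1 I' (hFP _ h) J' (hFP _ h')
        have hIF : I ∈ P.filter (fun I' => I' ⊆ I₀) := Finset.mem_filter.mpr ⟨hIP, hsb⟩
        have hFcov : ⋃₀ ((P.filter (fun I' => I' ⊆ I₀)) : Set (Set ℝ)) = I₀ := by
          apply subset_antisymm
          · exact Set.sUnion_subset (fun I' hI' => hFsub I' (by exact_mod_cast hI'))
          · intro x hx
            have h1 : x ∈ closure (Set.Ioo (((i₀:ℝ)-1)/2^k₀) ((i₀:ℝ)/2^k₀) \ EP P) := by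
              apply Icc_subset_closure (EP_finite hGR.1.1) hI₀d.lt
              rw [← hI₀d.eqIcc]; exact hx
            have h2 : Set.Ioo (((i₀:ℝ)-1)/2^k₀) ((i₀:ℝ)/2^k₀) \ EP P ⊆
                ⋃₀ ((P.filter (fun I' => I' ⊆ I₀)) : Set (Set ℝ)) := by
              rintro z ⟨hz, hzE⟩
              have hzI₀ : z ∈ I₀ := by
                rw [hI₀d.eqIcc]; exact Set.Ioo_subset_Icc_self hz
              have hzint₀ : z ∈ interior I₀ := by rw [hI₀d.int_eq]; exact hz
              obtain ⟨I', hI'P, hzI'⟩ :=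
                part_cover hGR.1 (part_subset_unit hP₀part hI₀ hzI₀)
              have hzint' : z ∈ interior I' :=
                mem_interior_of_not_EP hI'P (hGR.1.1 I' hI'P) hzI' hzE
              have hI'I₀ : I' ⊆ I₀ := by
                rcases trichotomy (hGR.1.1 I' hI'P) ⟨_,_,hI₀d⟩ with ha | ha | hdd
                · exact ha
                · exfalso
                  have hne' : I ≠ I' := by
                    intro he
                    exact heq (subset_antisymm hsb (by rw [he]; exact ha))
                  obtain ⟨x', hx'⟩ := hId.interior_nonempty
                  have hmm : x' ∈ interior I ∩ interior I' :=
                    ⟨hx', interior_mono (hsb.trans ha) hx'⟩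
                  rw [hGR.1.2.1 I hIP I' hI'P hne'] at hmm; exact hmm
                · exfalso
                  have hmm : z ∈ interior I' ∩ interior I₀ := ⟨hzint', hzint₀⟩
                  rw [hdd] at hmm; exact hmm
              have hmemF : I' ∈ P.filter (fun I'' => I'' ⊆ I₀) :=
                Finset.mem_filter.mpr ⟨hI'P, hI'I₀⟩
              exact Set.mem_sUnion.mpr ⟨I', by exact_mod_cast hmemF, hzI'⟩
            have h3 := closure_mono h2 h1
            rwa [(sUnion_closed hFdy).closure_eq] at h3
        have h2elt : ∃ Ia ∈ P.filter (fun I' => I' ⊆ I₀), ∃ Ib ∈ P.filter (fun I' => I' ⊆ I₀), Ia ≠ Ib := by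
          have hssub : I ⊂ I₀ := ⟨hsb, fun h => heq (subset_antisymm hsb h)⟩
          obtain ⟨x, hxI₀, hxI⟩ := Set.exists_of_ssubset hssub
          have hx' : x ∈ ⋃₀ ((P.filter (fun I' => I' ⊆ I₀)) : Set (Set ℝ)) := by
            rw [hFcov]; exact hxI₀
          rw [Set.mem_sUnion] at hx'
          obtain ⟨Ib, hIbF, hxIb⟩ := hx'
          exact ⟨I, hIF, Ib, by exact_mod_cast hIbF,
            fun h => hxI (by rw [h]; exact hxIb)⟩
        obtain ⟨I₁, hI₁F, I₂, hI₂F, hne12, hUdy⟩ :=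
          exists_sibling_pair hFdy hFdisj hFcov hI₀d h2elt
        exact merge_gridRep ⟨hGR.1, hGR.2.1, hGR.2.2⟩ hGR₀ hI₀ (hFP I₁ hI₁F)
          (hFP I₂ hI₂F) hne12 hUdy (hFsub _ hI₁F) (hFsub _ hI₂F)
    · exfalso
      obtain ⟨x, hx⟩ := hnemp
      rw [hd] at hx; exact hx
  have hsurj : Set.SurjOn (fun I₀ => if h : ∃ I ∈ P, I₀ ⊆ I then h.choose else ∅)
      (P₀ : Set (Set ℝ)) (P : Set (Set ℝ)) := by
    intro I hIPc
    have hIPf : I ∈ P := by exact_mod_cast hIPc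
    obtain ⟨kI, iI, hId⟩ := isDyadic_iff.mp (hGR.1.1 I hIPf)
    have hEfin : (EP P ∪ EP P₀).Finite :=
      (EP_finite hGR.1.1).union (EP_finite hP₀part.1)
    obtain ⟨t, htIoo, htE⟩ := exists_generic hEfin hId.lt
    have htI : t ∈ I := by rw [hId.eqIcc]; exact Set.Ioo_subset_Icc_self htIoo
    have htint : t ∈ interior I := by rw [hId.int_eq]; exact htIoo
    obtain ⟨I₀, hI₀P₀, htI₀⟩ := part_cover hP₀part (part_subset_unit hGR.1 hIPf htI)
    have htint₀ : t ∈ interior I₀ := mem_interior_of_not_EP hI₀P₀ (hP₀part.1 _ hI₀P₀)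
      htI₀ (fun h => htE (Set.mem_union_right _ h))
    have hI₀I : I₀ ⊆ I := claim I₀ hI₀P₀ I hIPf ⟨t, htint₀, htint⟩
    have hex : ∃ I' ∈ P, I₀ ⊆ I' := ⟨I, hIPf, hI₀I⟩
    refine ⟨I₀, by exact_mod_cast hI₀P₀, ?_⟩
    simp only [dif_pos hex]
    obtain ⟨hc1, hc2⟩ := hex.choose_spec
    by_contra hneq
    obtain ⟨k0, i0, h0d⟩ := isDyadic_iff.mp (hP₀part.1 I₀ hI₀P₀)
    obtain ⟨x, hx⟩ := h0d.interior_nonempty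
    have hmm : x ∈ interior hex.choose ∩ interior I :=
      ⟨interior_mono hc2 hx, interior_mono hI₀I hx⟩
    rw [hGR.1.2.1 _ hc1 I hIPf hneq] at hmm; exact hmm
  have hle := Finset.card_le_card_of_surjOn _ hsurj
  calc P.card ≤ P₀.card := hle
    _ ≤ Part.card := hP₀card
    _ = N := hcard

end S18

theorem stmt18 (f : ℝ × ℝ → ℝ × ℝ) (N : ℕ) (Part : Finset (Set (ℝ × ℝ)))
    (hcard : Part.card = N)
    (hrect : ∀ R ∈ Part, IsDyadicRect R)
    (hdisj : ∀ R ∈ Part, ∀ R' ∈ Part, R ≠ R' → interior R ∩ interior R' = ∅)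
    (hcover : ⋃₀ (Part : Set (Set (ℝ × ℝ))) = Set.Icc (0 : ℝ) 1 ×ˢ Set.Icc (0 : ℝ) 1)
    (haff : ∀ R ∈ Part, DyadicAffineOn f R ∧ IsDyadicRect (f '' R)) :
    (∃ P Q : Finset (Set ℝ), GridRep f P Q ∧ P.card * Q.card ≤ N ^ 2) ∧
    ∀ P Q : Finset (Set ℝ), ReducedGridRep f P Q → P.card * Q.card ≤ N ^ 2 := by
  classical
  obtain ⟨P₀, Q₀, hGR₀, hPc, hQc, hVmin⟩ := S18.main hcard hrect hdisj hcover haff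
  constructor
  · refine ⟨P₀, Q₀, hGR₀, ?_⟩
    calc P₀.card * Q₀.card ≤ N * N := Nat.mul_le_mul hPc hQc
      _ = N^2 := (sq N).symm
  · intro P Q hred
    obtain ⟨hGR, hnv, hnh⟩ := hred
    have hP : P.card ≤ N := hVmin P Q hGR hnv
    -- swapped package
    have hcard' : (Part.image (fun R => Prod.swap '' R)).card = N := by
      rw [Finset.card_image_of_injective _
        (Set.image_injective.mpr Prod.swap_injective), hcard]
    have hrect' : ∀ R ∈ Part.image (fun R => Prod.swap '' R), IsDyadicRect R := by
      intro R hR; obtain ⟨R₀, hR₀, rfl⟩ := Finset.mem_image.mp hR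
      exact S18.isDyadicRect_swap (hrect R₀ hR₀)
    have hdisj' : ∀ R ∈ Part.image (fun R => Prod.swap '' R),
        ∀ R' ∈ Part.image (fun R => Prod.swap '' R), R ≠ R' →
          interior R ∩ interior R' = ∅ := by
      intro R hR R' hR' hne
      obtain ⟨R₀, hR₀, rfl⟩ := Finset.mem_image.mp hR
      obtain ⟨R₀', hR₀', rfl⟩ := Finset.mem_image.mp hR'
      have hne₀ : R₀ ≠ R₀' := fun h => hne (by rw [h])
      rw [S18.interior_swap, S18.interior_swap,
        ← Set.image_inter Prod.swap_injective,
        hdisj R₀ hR₀ R₀' hR₀' hne₀, Set.image_empty]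
    have hcover' : ⋃₀ ((Part.image (fun R => Prod.swap '' R)) : Set (Set (ℝ×ℝ)))
        = Set.Icc (0:ℝ) 1 ×ˢ Set.Icc (0:ℝ) 1 := by
      have h1 : ⋃₀ ((Part.image (fun R => Prod.swap '' R)) : Set (Set (ℝ×ℝ)))
          = Prod.swap '' ⋃₀ (Part : Set (Set (ℝ×ℝ))) := by
        apply subset_antisymm
        · apply Set.sUnion_subset
          intro R hR
          obtain ⟨R₀, hR₀, rfl⟩ := Finset.mem_image.mp
            (by exact_mod_cast hR : R ∈ Part.image (fun R => Prod.swap '' R))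
          exact Set.image_mono (Set.subset_sUnion_of_mem (by exact_mod_cast hR₀))
        · rintro p ⟨q, hq, rfl⟩
          rw [Set.mem_sUnion] at hq
          obtain ⟨R₀, hR₀, hqR⟩ := hq
          have hR₀' : R₀ ∈ Part := by exact_mod_cast hR₀
          have hmm' : Prod.swap '' R₀ ∈ Part.image (fun R => Prod.swap '' R) :=
            Finset.mem_image_of_mem _ hR₀'
          exact Set.mem_sUnion.mpr ⟨Prod.swap '' R₀, by exact_mod_cast hmm',
            Set.mem_image_of_mem _ hqR⟩
      rw [h1, hcover, Set.image_swap_prod]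
    have haff' : ∀ R ∈ Part.image (fun R => Prod.swap '' R),
        DyadicAffineOn (S18.swapMap f) R ∧ IsDyadicRect (S18.swapMap f '' R) := by
      intro R hR
      obtain ⟨R₀, hR₀, rfl⟩ := Finset.mem_image.mp hR
      obtain ⟨a, b, c, d, hf⟩ := (haff R₀ hR₀).1
      constructor
      · refine ⟨b, a, d, c, ?_⟩
        rintro p ⟨q, hq, rfl⟩
        have hq' := hf q hq
        simp only [S18.swapMap, Prod.swap_swap, hq', Prod.swap_prod_mk,
          Prod.fst_swap, Prod.snd_swap]
      · have him : S18.swapMap f '' (Prod.swap '' R₀) = Prod.swap '' (f '' R₀) := by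
          rw [Set.image_image, Set.image_image]; rfl
        rw [him]
        exact S18.isDyadicRect_swap (haff R₀ hR₀).2
    obtain ⟨_, _, _, _, _, hVmin'⟩ := S18.main hcard' hrect' hdisj' hcover' haff'
    have hGR' : GridRep (S18.swapMap f) Q P := S18.gridRep_swap hGR
    have hnv' : ¬ VertReducible (S18.swapMap f) Q P := by
      intro hv
      obtain ⟨J₁, hJ₁, J₂, hJ₂, hne, hUdy, hg⟩ := hv
      apply hnh
      refine ⟨J₁, hJ₁, J₂, hJ₂, hne, hUdy, ?_⟩
      have hgg := S18.gridRep_swap hg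
      rwa [S18.swapMap_swapMap] at hgg
    have hQle : Q.card ≤ N := hVmin' Q P hGR' hnv'
    calc P.card * Q.card ≤ N * N := Nat.mul_le_mul hP hQle
      _ = N^2 := (sq N).symm
end
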